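/- arXiv:1902.10195 — 3 statements merged into one kernel-verified Lean document; each statement's English description precedes it below -/
import Mathlib

section
/- In the general linear model Y = (X ⊗ I_p)β + ε with fixed design X of full column rank, independent errors satisfying (M1), and under (M3)–(M6), the White-type sandwich covariance estimator Σ̂_full = ((X'X/N)⁻¹ ⊗ I_p)(N⁻¹(X' ⊗ I_p)Ŝ(X ⊗ I_p))((X'X/N)⁻¹ ⊗ I_p), where Ŝ = ⊕_{ℓ=1}^N u_ℓ u_ℓ' is the block-diagonal matrix of residual outer products, satisfies Σ̂_full − Σ_full → 0 in probability element-wise as N → ∞, where Σ_full is the same expression with Ŝ replaced by S = Cov(ε). -/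
open MeasureTheory ProbabilityTheory Matrix Filter Topology

noncomputable section

namespace GLMArray

variable {p d : ℕ}
variable (X : (N : ℕ) → Matrix (Fin N) (Fin d) ℝ)
variable {Ω : Type*} [MeasurableSpace Ω]
variable (eps : (N : ℕ) → Fin N → Ω → Fin p → ℝ)
variable (βv : Fin d → Fin p → ℝ)

/-- The general linear model `Y = (X ⊗ I_p)β + ε`, coordinatewise. -/
def outcome (N : ℕ) (ℓ : Fin N) (ω : Ω) (k : Fin p) : ℝ :=
  (∑ r, X N ℓ r * βv r k) + eps N ℓ ω k

/-- The OLS estimator `β̂ = ((X'X)⁻¹X' ⊗ I_p)Y`, coordinatewise. -/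
def betaHat (N : ℕ) (ω : Ω) (r : Fin d) (k : Fin p) : ℝ :=
  ∑ ℓ, (((X N)ᵀ * X N)⁻¹ * (X N)ᵀ) r ℓ * outcome X eps βv N ℓ ω k

/-- The OLS residual vectors `u_ℓ = Y_ℓ − (x_ℓ' ⊗ I_p)β̂`. -/
def resid (N : ℕ) (ω : Ω) (ℓ : Fin N) (k : Fin p) : ℝ :=
  outcome X eps βv N ℓ ω k - ∑ r, X N ℓ r * betaHat X eps βv N ω r k

/-- `(X'X/N)⁻¹X'`, the outer factor of the sandwich. -/
def Bmat (N : ℕ) : Matrix (Fin d) (Fin N) ℝ :=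
  (((N : ℝ)⁻¹ • ((X N)ᵀ * X N))⁻¹) * (X N)ᵀ

/-- The entries of the White-type sandwich estimator
`Σ̂_full = ((X'X/N)⁻¹ ⊗ I_p)(N⁻¹(X' ⊗ I_p)Ŝ(X ⊗ I_p))((X'X/N)⁻¹ ⊗ I_p)`,
`Ŝ = ⊕_ℓ u_ℓu_ℓ'`, at row `(r,k)` and column `(s,l)`. -/
def sigmaFullHat (N : ℕ) (ω : Ω) (r s : Fin d) (k l : Fin p) : ℝ :=
  (N : ℝ)⁻¹ * ∑ ℓ, Bmat X N r ℓ * resid X eps βv N ω ℓ k * resid X eps βv N ω ℓ l *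
    Bmat X N s ℓ

/-- The entries of the corresponding population quantity `Σ_full`, obtained by replacing
`Ŝ` with `S = Cov(ε) = ⊕_ℓ Σ_ℓ`. -/
def sigmaFull (Sig : (N : ℕ) → Fin N → Matrix (Fin p) (Fin p) ℝ)
    (N : ℕ) (r s : Fin d) (k l : Fin p) : ℝ :=
  (N : ℝ)⁻¹ * ∑ ℓ, Bmat X N r ℓ * Sig N ℓ k l * Bmat X N s ℓ

end GLMArray

open GLMArray

/-! ### Auxiliary machinery -/

namespace SandAux

variable {Ω : Type*} [MeasurableSpace Ω]

/-- Convergence to zero in probability. -/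
def TendP (P : Measure Ω) (f : ℕ → Ω → ℝ) : Prop :=
  ∀ δ : ℝ, 0 < δ → Tendsto (fun N => P {ω | δ ≤ |f N ω|}) atTop (𝓝 0)

lemma TendP.congr {P : Measure Ω} {f g : ℕ → Ω → ℝ}
    (hfg : ∀ᶠ N in atTop, ∀ ω, f N ω = g N ω) (hf : TendP P f) : TendP P g := by
  intro δ hδ
  refine (hf δ hδ).congr' ?_
  filter_upwards [hfg] with N hN
  congr 1; ext ω; simp only [Set.mem_setOf_eq, hN ω]

lemma TendP.add {P : Measure Ω} {f g : ℕ → Ω → ℝ}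
    (hf : TendP P f) (hg : TendP P g) : TendP P (fun N ω => f N ω + g N ω) := by
  intro δ hδ
  have hsub : ∀ N, P {ω | δ ≤ |f N ω + g N ω|} ≤
      P {ω | δ/2 ≤ |f N ω|} + P {ω | δ/2 ≤ |g N ω|} := by
    intro N
    refine le_trans (measure_mono ?_) (measure_union_le _ _)
    intro ω hω
    by_contra hc
    simp only [Set.mem_union, Set.mem_setOf_eq, not_or, not_le] at hc
    have : |f N ω + g N ω| < δ := by
      calc |f N ω + g N ω| ≤ |f N ω| + |g N ω| := abs_add_le _ _
        _ < δ/2 + δ/2 := add_lt_add hc.1 hc.2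
        _ = δ := by ring
    exact absurd hω (by simpa using not_le.2 this)
  have h2 : (0:ℝ) < δ/2 := by linarith
  have := (hf (δ/2) h2).add (hg (δ/2) h2)
  rw [add_zero] at this
  exact tendsto_of_tendsto_of_tendsto_of_le_of_le tendsto_const_nhds this
    (fun N => zero_le) hsub

lemma TendP.mul {P : Measure Ω} {f g : ℕ → Ω → ℝ}
    (hf : TendP P f) (hg : TendP P g) : TendP P (fun N ω => f N ω * g N ω) := by
  intro δ hδ
  have hs : 0 < Real.sqrt δ := Real.sqrt_pos.2 hδ
  have hsub : ∀ N, P {ω | δ ≤ |f N ω * g N ω|} ≤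
      P {ω | Real.sqrt δ ≤ |f N ω|} + P {ω | Real.sqrt δ ≤ |g N ω|} := by
    intro N
    refine le_trans (measure_mono ?_) (measure_union_le _ _)
    intro ω hω
    by_contra hc
    simp only [Set.mem_union, Set.mem_setOf_eq, not_or, not_le] at hc
    have : |f N ω * g N ω| < δ := by
      rw [abs_mul]
      calc |f N ω| * |g N ω| < Real.sqrt δ * Real.sqrt δ :=
            mul_lt_mul'' hc.1 hc.2 (abs_nonneg _) (abs_nonneg _)
        _ = δ := Real.mul_self_sqrt hδ.le
    exact absurd hω (by simpa using not_le.2 this)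
  have := (hf _ hs).add (hg _ hs)
  rw [add_zero] at this
  exact tendsto_of_tendsto_of_tendsto_of_le_of_le tendsto_const_nhds this
    (fun N => zero_le) hsub

/-- Multiplication by an eventually bounded deterministic sequence. -/
lemma TendP.bdd_mul {P : Measure Ω} {f : ℕ → Ω → ℝ} {c : ℕ → ℝ} {K : ℝ}
    (hc : ∀ᶠ N in atTop, |c N| ≤ K) (hf : TendP P f) :
    TendP P (fun N ω => c N * f N ω) := by
  intro δ hδ
  set K' : ℝ := max K 1 with hK'
  have hK'pos : 0 < K' := lt_of_lt_of_le one_pos (le_max_right _ _)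
  have hδ' : 0 < δ / K' := div_pos hδ hK'pos
  have hsub : ∀ᶠ N in atTop, P {ω | δ ≤ |c N * f N ω|} ≤ P {ω | δ/K' ≤ |f N ω|} := by
    filter_upwards [hc] with N hN
    refine measure_mono ?_
    intro ω hω
    simp only [Set.mem_setOf_eq, abs_mul] at hω ⊢
    have hcK : |c N| ≤ K' := le_trans hN (le_max_left _ _)
    rw [div_le_iff₀ hK'pos]
    calc δ ≤ |c N| * |f N ω| := hω
      _ ≤ K' * |f N ω| := mul_le_mul_of_nonneg_right hcK (abs_nonneg _)
      _ = |f N ω| * K' := mul_comm _ _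
  exact tendsto_of_tendsto_of_tendsto_of_le_of_le' tendsto_const_nhds
    (hf _ hδ') (Eventually.of_forall fun N => zero_le) hsub

lemma TendP.neg {P : Measure Ω} {f : ℕ → Ω → ℝ} (hf : TendP P f) :
    TendP P (fun N ω => -f N ω) := by
  intro δ hδ
  simpa [abs_neg] using hf δ hδ

lemma TendP.sub {P : Measure Ω} {f g : ℕ → Ω → ℝ}
    (hf : TendP P f) (hg : TendP P g) : TendP P (fun N ω => f N ω - g N ω) := by
  have := hf.add hg.neg
  simpa [sub_eq_add_neg] using this

lemma tendP_zero {P : Measure Ω} : TendP P (fun _ _ => (0:ℝ)) := by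
  intro δ hδ
  have h0 : ∀ N : ℕ, P {ω | δ ≤ |(0:ℝ)|} = 0 := by
    intro N
    have : {ω : Ω | δ ≤ |(0:ℝ)|} = ∅ := by
      ext ω; simp [not_le.2 hδ]
    rw [this]; exact measure_empty
  have : (fun N : ℕ => P {ω | δ ≤ |(0:ℝ)|}) = fun _ => 0 := funext h0
  rw [this]; exact tendsto_const_nhds

lemma TendP.sum {P : Measure Ω} {ι : Type*} (s : Finset ι) {f : ι → ℕ → Ω → ℝ}
    (hf : ∀ i ∈ s, TendP P (f i)) :
    TendP P (fun N ω => ∑ i ∈ s, f i N ω) := by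
  classical
  induction s using Finset.induction_on with
  | empty => simpa using tendP_zero
  | insert a s hx ih =>
    simp only [Finset.sum_insert hx]
    exact (hf a (Finset.mem_insert_self a s)).add
      (ih fun i hi => hf i (Finset.mem_insert_of_mem hi))

/-- Master lemma: weighted averages of independent centered L² variables with
uniformly bounded variances and eventually bounded weights tend to 0 in probability. -/
lemma master (P : Measure Ω) [IsProbabilityMeasure P]
    (W : (N : ℕ) → Fin N → Ω → ℝ) (c : (N : ℕ) → Fin N → ℝ) (K C : ℝ)
    (hL2 : ∀ N ℓ, MemLp (W N ℓ) 2 P)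
    (hmean : ∀ N ℓ, ∫ ω, W N ℓ ω ∂P = 0)
    (hvar : ∀ N ℓ, variance (W N ℓ) P ≤ C)
    (hind : ∀ N, ∀ ℓ m : Fin N, ℓ ≠ m → IndepFun (W N ℓ) (W N m) P)
    (hc : ∀ᶠ N in atTop, ∀ ℓ, |c N ℓ| ≤ K) :
    TendP P (fun N ω => (N:ℝ)⁻¹ * ∑ ℓ, c N ℓ * W N ℓ ω) := by
  intro δ hδ
  set Z : (N : ℕ) → Ω → ℝ := fun N ω => (N:ℝ)⁻¹ * ∑ ℓ, c N ℓ * W N ℓ ω with hZ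
  have hZL2 : ∀ N, MemLp (Z N) 2 P := by
    intro N
    have : MemLp (fun ω => ∑ ℓ, c N ℓ * W N ℓ ω) 2 P := by
      have := memLp_finset_sum' (μ := P) (f := fun ℓ ω => c N ℓ * W N ℓ ω) Finset.univ
        (fun ℓ _ => (hL2 N ℓ).const_mul (c N ℓ))
      convert this using 1
      ext ω; simp
    simpa [hZ] using this.const_mul ((N:ℝ)⁻¹)
  have hZmean : ∀ N, ∫ ω, Z N ω ∂P = 0 := by
    intro N
    rw [hZ]
    simp only
    rw [integral_const_mul, integral_finset_sum _ (fun ℓ _ =>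
      ((hL2 N ℓ).integrable one_le_two).const_mul (c N ℓ))]
    simp [integral_const_mul, hmean N]
  have hZvar : ∀ᶠ N in atTop, variance (Z N) P ≤ K^2 * C / N := by
    filter_upwards [hc] with N hN
    have hvs : variance (fun ω => ∑ ℓ, c N ℓ * W N ℓ ω) P =
        ∑ ℓ, variance (fun ω => c N ℓ * W N ℓ ω) P := by
      have := IndepFun.variance_sum (μ := P)
        (X := fun ℓ ω => c N ℓ * W N ℓ ω) (s := Finset.univ)
        (fun ℓ _ => (hL2 N ℓ).const_mul (c N ℓ))
        (fun ℓ _ m _ hlm => (hind N ℓ m hlm).comp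
          (measurable_const_mul (c N ℓ)) (measurable_const_mul (c N m)))
      convert this using 2
      ext ω
      simp
    have h1 : variance (Z N) P =
        ((N:ℝ)⁻¹)^2 * ∑ ℓ, variance (fun ω => c N ℓ * W N ℓ ω) P := by
      rw [hZ]
      simp only
      rw [variance_const_mul, hvs]
    have h2 : ∀ ℓ : Fin N, variance (fun ω => c N ℓ * W N ℓ ω) P ≤ K^2 * C := by
      intro ℓ
      rw [variance_const_mul]
      have hcK : (c N ℓ)^2 ≤ K^2 := by
        have := hN ℓ
        nlinarith [abs_nonneg (c N ℓ), sq_abs (c N ℓ), sq_abs K]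
      have hv0 : 0 ≤ variance (W N ℓ) P := variance_nonneg _ _
      nlinarith [hvar N ℓ]
    calc variance (Z N) P ≤ ((N:ℝ)⁻¹)^2 * ∑ ℓ : Fin N, (K^2 * C) := by
          rw [h1]
          refine mul_le_mul_of_nonneg_left (Finset.sum_le_sum fun ℓ _ => h2 ℓ) (by positivity)
      _ = ((N:ℝ)⁻¹)^2 * (N * (K^2 * C)) := by simp [Finset.sum_const, mul_comm]
      _ = K^2 * C / N := by
          rcases Nat.eq_zero_or_pos N with h | h
          · simp [h]
          · have : (N:ℝ) ≠ 0 := Nat.cast_ne_zero.2 h.ne'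
            field_simp
  have hcheb : ∀ N, P {ω | δ ≤ |Z N ω|} ≤ ENNReal.ofReal (variance (Z N) P / δ^2) := by
    intro N
    have h := meas_ge_le_variance_div_sq (μ := P) (hZL2 N) hδ
    have e : {ω | δ ≤ |Z N ω - P[Z N]|} = {ω | δ ≤ |Z N ω|} := by
      have := hZmean N
      simp only [this, sub_zero]
    rwa [e] at h
  have hub : ∀ᶠ N in atTop, P {ω | δ ≤ |Z N ω|} ≤
      ENNReal.ofReal ((K^2 * C / δ^2) * (N:ℝ)⁻¹) := by
    filter_upwards [hZvar] with N hN
    refine (hcheb N).trans (ENNReal.ofReal_le_ofReal ?_)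
    have hδ2 : (0:ℝ) < δ^2 := by positivity
    calc variance (Z N) P / δ^2 ≤ (K^2 * C / N) / δ^2 := by gcongr
      _ = (K^2 * C / δ^2) * (N:ℝ)⁻¹ := by
          field_simp
  have hlim : Tendsto (fun N : ℕ => ENNReal.ofReal ((K^2 * C / δ^2) * (N:ℝ)⁻¹))
      atTop (𝓝 0) := by
    have h1 : Tendsto (fun N : ℕ => (K^2 * C / δ^2) * (N:ℝ)⁻¹) atTop (𝓝 0) := by
      have := tendsto_inv_atTop_nhds_zero_nat.const_mul (K^2 * C / δ^2)
      simpa using this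
    have := (ENNReal.continuous_ofReal.tendsto 0).comp h1
    rwa [ENNReal.ofReal_zero] at this
  exact tendsto_of_tendsto_of_tendsto_of_le_of_le' tendsto_const_nhds hlim
    (Eventually.of_forall fun N => zero_le) hub

/-- Eventual boundedness of the entries of `Bmat` plus eventual invertibility. -/
lemma bmat_facts {d : ℕ} (X : (N : ℕ) → Matrix (Fin N) (Fin d) ℝ)
    (B : ℝ) (Ξ : Matrix (Fin d) (Fin d) ℝ)
    (hXbound : ∀ N ℓ r, |X N ℓ r| ≤ B)
    (hΞpd : Ξ.PosDef)
    (hΞ : ∀ r s, Tendsto (fun N : ℕ => (N : ℝ)⁻¹ * ((X N)ᵀ * X N) r s) atTop (𝓝 (Ξ r s))) :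
    ∃ K : ℝ, 0 ≤ K ∧ ∀ᶠ N : ℕ in atTop,
      IsUnit (((N : ℝ)⁻¹ • ((X N)ᵀ * X N)).det) ∧
      ∀ r ℓ, |Bmat X N r ℓ| ≤ K := by
  classical
  set A : (N : ℕ) → Matrix (Fin d) (Fin d) ℝ := fun N => (N : ℝ)⁻¹ • ((X N)ᵀ * X N) with hA
  have hAtend : Tendsto A atTop (𝓝 Ξ) := by
    apply tendsto_pi_nhds.2
    intro r
    rw [tendsto_pi_nhds]
    intro s
    simpa [hA, Matrix.smul_apply] using hΞ r s
  have hdet : Tendsto (fun N => (A N).det) atTop (𝓝 Ξ.det) :=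
    ((continuous_id.matrix_det).tendsto Ξ).comp hAtend
  have hdet0 : Ξ.det ≠ 0 := hΞpd.det_pos.ne'
  have hev_unit : ∀ᶠ N : ℕ in atTop, IsUnit (A N).det := by
    filter_upwards [hdet.eventually_ne hdet0] with N hN
    exact isUnit_iff_ne_zero.2 hN
  have hinv : ∀ r s, Tendsto (fun N => (A N)⁻¹ r s) atTop (𝓝 (Ξ⁻¹ r s)) := by
    intro r s
    have hinvdet : Tendsto (fun N => ((A N).det)⁻¹) atTop (𝓝 ((Ξ.det)⁻¹)) :=
      hdet.inv₀ hdet0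
    have hadj : Tendsto (fun N => (A N).adjugate r s) atTop (𝓝 (Ξ.adjugate r s)) := by
      have h1 : Tendsto (fun N => (A N).adjugate) atTop (𝓝 Ξ.adjugate) :=
        ((continuous_id.matrix_adjugate).tendsto Ξ).comp hAtend
      have h2 := (continuous_apply s).tendsto (Ξ.adjugate r)
      have h3 := (continuous_apply r).tendsto Ξ.adjugate
      exact h2.comp (h3.comp h1)
    have := hinvdet.mul hadj
    have he : ∀ M : Matrix (Fin d) (Fin d) ℝ, M⁻¹ r s = M.det⁻¹ * M.adjugate r s := by
      intro M
      rw [Matrix.inv_def]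
      simp [Ring.inverse_eq_inv', Matrix.smul_apply]
    simp only [he]
    exact this
  set K₀ : ℝ := ∑ r : Fin d, ∑ s : Fin d, (|Ξ⁻¹ r s| + 1) with hK₀
  have hK₀nn : 0 ≤ K₀ := Finset.sum_nonneg fun r _ => Finset.sum_nonneg fun s _ => by positivity
  have hev_bound : ∀ᶠ N : ℕ in atTop, ∀ r s, |(A N)⁻¹ r s| ≤ K₀ := by
    rw [eventually_all]
    intro r
    rw [eventually_all]
    intro s
    have habs : Tendsto (fun N => |(A N)⁻¹ r s|) atTop (𝓝 |Ξ⁻¹ r s|) := (hinv r s).abs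
    have hlt : ∀ᶠ N in atTop, |(A N)⁻¹ r s| < |Ξ⁻¹ r s| + 1 :=
      habs.eventually_lt_const (by linarith)
    filter_upwards [hlt] with N hN
    refine hN.le.trans ?_
    calc |Ξ⁻¹ r s| + 1 ≤ ∑ s' : Fin d, (|Ξ⁻¹ r s'| + 1) :=
          Finset.single_le_sum (f := fun s' => |Ξ⁻¹ r s'| + 1)
            (fun i _ => by positivity) (Finset.mem_univ s)
      _ ≤ K₀ := Finset.single_le_sum
          (f := fun r' => ∑ s' : Fin d, (|Ξ⁻¹ r' s'| + 1))
          (fun i _ => Finset.sum_nonneg fun j _ => by positivity) (Finset.mem_univ r)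
  have hB' : 0 ≤ max B 0 := le_max_right _ _
  refine ⟨d * (K₀ * max B 0), by positivity, ?_⟩
  filter_upwards [hev_unit, hev_bound] with N hN1 hN2
  refine ⟨hN1, ?_⟩
  intro r ℓ
  have hBm : Bmat X N r ℓ = ∑ s, (A N)⁻¹ r s * X N ℓ s := by
    simp [Bmat, hA, Matrix.mul_apply, transpose_apply]
  rw [hBm]
  calc |∑ s, (A N)⁻¹ r s * X N ℓ s| ≤ ∑ s, |(A N)⁻¹ r s * X N ℓ s| :=
        Finset.abs_sum_le_sum_abs _ _
    _ ≤ ∑ _s : Fin d, K₀ * max B 0 := by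
        refine Finset.sum_le_sum fun s _ => ?_
        rw [abs_mul]
        exact mul_le_mul (hN2 r s) ((hXbound N ℓ s).trans (le_max_left _ _))
          (abs_nonneg _) hK₀nn
    _ = d * (K₀ * max B 0) := by simp [Finset.sum_const, nsmul_eq_mul]

variable {p d : ℕ}
variable (X : (N : ℕ) → Matrix (Fin N) (Fin d) ℝ)
variable (eps : (N : ℕ) → Fin N → Ω → Fin p → ℝ)
variable (βv : Fin d → Fin p → ℝ)

lemma resid_eq (N : ℕ) (ω : Ω) (ℓ : Fin N) (k : Fin p) :
    resid X eps βv N ω ℓ k =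
      eps N ℓ ω k - ∑ t, X N ℓ t * (betaHat X eps βv N ω t k - βv t k) := by
  simp only [resid, outcome, mul_sub, Finset.sum_sub_distrib]
  ring

lemma betaHat_eq (N : ℕ) (hN : 1 ≤ N)
    (hunit : IsUnit (((N : ℝ)⁻¹ • ((X N)ᵀ * X N)).det)) (ω : Ω) (r : Fin d) (k : Fin p) :
    betaHat X eps βv N ω r k - βv r k =
      (N : ℝ)⁻¹ * ∑ ℓ, Bmat X N r ℓ * eps N ℓ ω k := by
  have hNne : (N : ℝ) ≠ 0 := Nat.cast_ne_zero.2 (by omega)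
  set A : Matrix (Fin d) (Fin d) ℝ := (N : ℝ)⁻¹ • ((X N)ᵀ * X N) with hA
  have hXtX : (X N)ᵀ * X N = (N : ℝ) • A := by
    rw [hA, smul_smul, mul_inv_cancel₀ hNne, one_smul]
  have hinv : ((X N)ᵀ * X N)⁻¹ = (N : ℝ)⁻¹ • A⁻¹ := by
    refine Matrix.inv_eq_right_inv ?_
    rw [hXtX, Matrix.smul_mul, Matrix.mul_smul, smul_smul, mul_inv_cancel₀ hNne,
      one_smul, Matrix.mul_nonsing_inv _ hunit]
  have hC : ((X N)ᵀ * X N)⁻¹ * (X N)ᵀ = (N : ℝ)⁻¹ • Bmat X N := by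
    rw [hinv, Matrix.smul_mul, Bmat]
  have hCX : (((X N)ᵀ * X N)⁻¹ * (X N)ᵀ) * X N = 1 := by
    rw [Matrix.mul_assoc]
    refine Matrix.nonsing_inv_mul _ ?_
    rw [hXtX, Matrix.det_smul]
    exact (IsUnit.pow _ (isUnit_iff_ne_zero.2 hNne)).mul hunit
  have hexp : betaHat X eps βv N ω r k =
      (∑ t, ((((X N)ᵀ * X N)⁻¹ * (X N)ᵀ) * X N) r t * βv t k) +
      ∑ ℓ, (((X N)ᵀ * X N)⁻¹ * (X N)ᵀ) r ℓ * eps N ℓ ω k := by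
    simp only [betaHat, outcome, mul_add, Finset.sum_add_distrib]
    congr 1
    simp only [Matrix.mul_apply, Finset.sum_mul, Finset.mul_sum]
    rw [Finset.sum_comm]
    refine Finset.sum_congr rfl fun ℓ _ => Finset.sum_congr rfl fun t _ => Finset.sum_congr rfl fun _ _ => by ring
  rw [hexp, hCX]
  have h1 : (∑ t, (1 : Matrix (Fin d) (Fin d) ℝ) r t * βv t k) = βv r k := by
    simp [Matrix.one_apply]
  rw [h1, hC]
  simp only [Matrix.smul_apply, smul_eq_mul]
  rw [Finset.mul_sum]
  ring_nf

set_option maxHeartbeats 1000000 in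
lemma decomp (Sig : (N : ℕ) → Fin N → Matrix (Fin p) (Fin p) ℝ)
    (N : ℕ) (ω : Ω) (r s : Fin d) (k l : Fin p) :
    sigmaFullHat X eps βv N ω r s k l - sigmaFull X Sig N r s k l =
      ((N : ℝ)⁻¹ * ∑ ℓ, (Bmat X N r ℓ * Bmat X N s ℓ) *
          (eps N ℓ ω k * eps N ℓ ω l - Sig N ℓ k l))
      - (∑ t, (betaHat X eps βv N ω t l - βv t l) *
          ((N : ℝ)⁻¹ * ∑ ℓ, (Bmat X N r ℓ * Bmat X N s ℓ * X N ℓ t) * eps N ℓ ω k))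
      - (∑ t, (betaHat X eps βv N ω t k - βv t k) *
          ((N : ℝ)⁻¹ * ∑ ℓ, (Bmat X N r ℓ * Bmat X N s ℓ * X N ℓ t) * eps N ℓ ω l))
      + (∑ q : Fin d × Fin d,
          ((betaHat X eps βv N ω q.1 k - βv q.1 k) * (betaHat X eps βv N ω q.2 l - βv q.2 l)) *
          ((N : ℝ)⁻¹ * ∑ ℓ, Bmat X N r ℓ * Bmat X N s ℓ * X N ℓ q.1 * X N ℓ q.2)) := by
  classical
  set G : Fin d → Fin p → ℝ := fun t m => betaHat X eps βv N ω t m - βv t m with hG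
  have swap1 : ∀ {ι : Type} (_ : Fintype ι) (g : ι → ℝ) (f : Fin N → ι → ℝ),
      (∑ t, g t * ((N : ℝ)⁻¹ * ∑ ℓ, f ℓ t)) = (N : ℝ)⁻¹ * ∑ ℓ, ∑ t, g t * f ℓ t := by
    intro ι _ g f
    symm
    calc (N:ℝ)⁻¹ * ∑ ℓ, ∑ t, g t * f ℓ t
        = (N:ℝ)⁻¹ * ∑ t, ∑ ℓ, g t * f ℓ t := by rw [Finset.sum_comm]
      _ = ∑ t, (N:ℝ)⁻¹ * ∑ ℓ, g t * f ℓ t := Finset.mul_sum _ _ _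
      _ = ∑ t, g t * ((N:ℝ)⁻¹ * ∑ ℓ, f ℓ t) := by
          refine Finset.sum_congr rfl fun t _ => ?_
          rw [← Finset.mul_sum]
          ring
  rw [swap1 inferInstance (fun t => G t l) _, swap1 inferInstance (fun t => G t k) _,
    swap1 inferInstance _ _]
  rw [sigmaFullHat, sigmaFull, ← mul_sub, ← Finset.sum_sub_distrib]
  rw [sub_sub, ← mul_add, ← Finset.sum_add_distrib, ← mul_sub, ← Finset.sum_sub_distrib,
    ← mul_add, ← Finset.sum_add_distrib]
  refine congrArg _ (Finset.sum_congr rfl fun ℓ _ => ?_)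
  rw [resid_eq X eps βv N ω ℓ k, resid_eq X eps βv N ω ℓ l]
  set a : ℝ := ∑ t, X N ℓ t * G t k with ha
  set b : ℝ := ∑ t, X N ℓ t * G t l with hb
  have e1 : (∑ t, G t l * (Bmat X N r ℓ * Bmat X N s ℓ * X N ℓ t * eps N ℓ ω k)) =
      (Bmat X N r ℓ * Bmat X N s ℓ * eps N ℓ ω k) * b := by
    rw [hb, Finset.mul_sum]
    refine Finset.sum_congr rfl fun t _ => by ring
  have e2 : (∑ t, G t k * (Bmat X N r ℓ * Bmat X N s ℓ * X N ℓ t * eps N ℓ ω l)) =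
      (Bmat X N r ℓ * Bmat X N s ℓ * eps N ℓ ω l) * a := by
    rw [ha, Finset.mul_sum]
    refine Finset.sum_congr rfl fun t _ => by ring
  have e3 : (∑ q : Fin d × Fin d, (G q.1 k * G q.2 l) *
        (Bmat X N r ℓ * Bmat X N s ℓ * X N ℓ q.1 * X N ℓ q.2)) =
      (Bmat X N r ℓ * Bmat X N s ℓ) * (a * b) := by
    rw [ha, hb, Finset.sum_mul_sum, Fintype.sum_prod_type, Finset.mul_sum]
    refine Finset.sum_congr rfl fun t _ => ?_
    rw [Finset.mul_sum]
    refine Finset.sum_congr rfl fun t' _ => by ring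
  rw [e1, e2, e3]
  ring

/-! ### Moment helper lemmas -/

lemma abs_mul_le {a b A B : ℝ} (ha : |a| ≤ A) (hb : |b| ≤ B) : |a * b| ≤ A * B := by
  rw [abs_mul]
  exact mul_le_mul ha hb (abs_nonneg _) ((abs_nonneg a).trans ha)

lemma memℒp_mul_of_four {P : Measure Ω} [IsProbabilityMeasure P] {f g : Ω → ℝ}
    (hf : MemLp f 4 P) (hg : MemLp g 4 P) :
    MemLp (fun ω => f ω * g ω) 2 P := by
  have h : (1 : ENNReal)/2 = 1/4 + 1/4 := by
    rw [← ENNReal.toReal_eq_toReal_iff' (by norm_num) (by norm_num)]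
    rw [ENNReal.toReal_add (by norm_num) (by norm_num)]
    simp [ENNReal.toReal_div]
    norm_num
  haveI : ENNReal.HolderTriple 4 4 2 := ⟨by rw [one_div, one_div] at h; exact h.symm⟩
  exact hg.smul hf

lemma integrable_pow4 {P : Measure Ω} [IsProbabilityMeasure P] {f : Ω → ℝ}
    (hf : MemLp f 4 P) : Integrable (fun ω => f ω ^ 4) P := by
  have h2 : MemLp (fun ω => f ω * f ω) 2 P := memℒp_mul_of_four hf hf
  have := h2.integrable_sq
  refine this.congr (ae_of_all _ fun ω => ?_)
  simp only
  ring

lemma integral_sq_le {P : Measure Ω} [IsProbabilityMeasure P] {f : Ω → ℝ} {C₁ : ℝ}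
    (hf : MemLp f 4 P) (hm : ∫ ω, f ω ^ 4 ∂P ≤ C₁) :
    ∫ ω, f ω ^ 2 ∂P ≤ (1 + C₁)/2 := by
  have h2 : MemLp f 2 P := hf.mono_exponent (by norm_num)
  have hint2 : Integrable (fun ω => f ω ^ 2) P := h2.integrable_sq
  have hint4 : Integrable (fun ω => f ω ^ 4) P := integrable_pow4 hf
  have hintr : Integrable (fun ω => (1 + f ω ^ 4)/2) P :=
    ((integrable_const 1).add hint4).div_const 2
  have hmono : ∫ ω, f ω ^ 2 ∂P ≤ ∫ ω, (1 + f ω ^ 4)/2 ∂P := by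
    refine integral_mono hint2 hintr fun ω => ?_
    have := sq_nonneg (f ω ^ 2 - 1)
    simp only
    nlinarith
  refine hmono.trans ?_
  rw [integral_div, integral_add (integrable_const 1) hint4, integral_const]
  simp only [measureReal_def, measure_univ, ENNReal.toReal_one, smul_eq_mul, one_mul]
  linarith

lemma variance_le_integral_sq {P : Measure Ω} [IsProbabilityMeasure P] {f : Ω → ℝ}
    (hf : MemLp f 2 P) : variance f P ≤ ∫ ω, f ω ^ 2 ∂P := by
  rw [variance_eq_sub hf]
  have : (∫ ω, (f ^ 2) ω ∂P) = ∫ ω, f ω ^ 2 ∂P := by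
    refine integral_congr_ae (ae_of_all _ fun ω => ?_)
    simp [Pi.pow_apply]
  calc P[f ^ 2] - P[f] ^ 2 ≤ P[f ^ 2] := by nlinarith [sq_nonneg (P[f])]
    _ = ∫ ω, f ω ^ 2 ∂P := this

lemma variance_prod_sub_const_le {P : Measure Ω} [IsProbabilityMeasure P]
    {f g : Ω → ℝ} {C₁ : ℝ} (hf : MemLp f 4 P) (hg : MemLp g 4 P)
    (hf4 : ∫ ω, f ω ^ 4 ∂P ≤ C₁) (hg4 : ∫ ω, g ω ^ 4 ∂P ≤ C₁) {m : ℝ}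
    (hm : ∫ ω, f ω * g ω ∂P = m) :
    variance (fun ω => f ω * g ω - m) P ≤ C₁ := by
  have hY2 : MemLp (fun ω => f ω * g ω) 2 P := memℒp_mul_of_four hf hg
  have hW2 : MemLp (fun ω => f ω * g ω - m) 2 P := hY2.sub (memLp_const m)
  have hYsq_int : Integrable (fun ω => (f ω * g ω)^2) P := hY2.integrable_sq
  have hY_int : Integrable (fun ω => f ω * g ω) P := hY2.integrable one_le_two
  -- ∫ Y² ≤ C₁
  have hYsq_le : ∫ ω, (f ω * g ω)^2 ∂P ≤ C₁ := by
    have hintr : Integrable (fun ω => (f ω ^ 4 + g ω ^ 4)/2) P :=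
      ((integrable_pow4 hf).add (integrable_pow4 hg)).div_const 2
    have hmono : ∫ ω, (f ω * g ω)^2 ∂P ≤ ∫ ω, (f ω ^ 4 + g ω ^ 4)/2 ∂P := by
      refine integral_mono hYsq_int hintr fun ω => ?_
      have := sq_nonneg (f ω ^ 2 - g ω ^ 2)
      simp only
      nlinarith
    refine hmono.trans ?_
    rw [integral_div, integral_add (integrable_pow4 hf) (integrable_pow4 hg)]
    linarith
  -- variance bound
  refine (variance_le_integral_sq hW2).trans ?_
  have hint1 : Integrable (fun ω => (f ω * g ω)^2 - (2*m) * (f ω * g ω)) P :=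
    hYsq_int.sub (hY_int.const_mul (2*m))
  have hexp : ∫ ω, (f ω * g ω - m)^2 ∂P =
      (∫ ω, (f ω * g ω)^2 ∂P) - 2*m*(∫ ω, f ω * g ω ∂P) + m^2 := by
    have he : ∫ ω, (f ω * g ω - m)^2 ∂P =
        ∫ ω, ((f ω * g ω)^2 - (2*m) * (f ω * g ω)) + m^2 ∂P := by
      refine integral_congr_ae (ae_of_all _ fun ω => ?_)
      ring
    rw [he, integral_add hint1 (integrable_const _),
      integral_sub hYsq_int (hY_int.const_mul (2*m)), integral_const_mul, integral_const]
    simp [measure_univ]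
  rw [hexp, hm]
  nlinarith

end SandAux

open SandAux

/-- **Step (A2) of the proof of Theorem 1.** In the general linear model with fixed design
of full column rank, uniformly bounded design entries, `N⁻¹X'X` converging to a positive
definite limit, and independent centered errors with uniformly bounded fourth moments
(M1), the White-type sandwich covariance estimator is consistent:
`Σ̂_full − Σ_full → 0` element-wise in probability as `N → ∞`. -/
theorem sandwich_estimator_consistent
    {p d : ℕ}
    (X : (N : ℕ) → Matrix (Fin N) (Fin d) ℝ)
    {Ω : Type*} [MeasurableSpace Ω] (P : Measure Ω) [IsProbabilityMeasure P]
    (eps : (N : ℕ) → Fin N → Ω → Fin p → ℝ)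
    (βv : Fin d → Fin p → ℝ)
    (Sig : (N : ℕ) → Fin N → Matrix (Fin p) (Fin p) ℝ)
    (B C₁ : ℝ) (Ξ : Matrix (Fin d) (Fin d) ℝ)
    -- measurability and integrability of the errors
    (hmeas : ∀ N ℓ k, Measurable (fun ω => eps N ℓ ω k))
    (hL4 : ∀ N ℓ k, MemLp (fun ω => eps N ℓ ω k) 4 P)
    -- (M1): independent, centered errors with covariance matrices Σ_ℓ and uniformly
    -- bounded fourth moments
    (hindep : ∀ N, iIndepFun
      (fun ℓ => eps N ℓ) P)
    (hmean : ∀ N ℓ k, ∫ ω, eps N ℓ ω k ∂P = 0)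
    (hcov : ∀ N ℓ k l, ∫ ω, eps N ℓ ω k * eps N ℓ ω l ∂P = Sig N ℓ k l)
    (hmom4 : ∀ N ℓ k, ∫ ω, (eps N ℓ ω k) ^ 4 ∂P ≤ C₁)
    -- the design has uniformly bounded entries and full column rank, and N⁻¹X'X converges
    -- to a positive definite limit
    (hXbound : ∀ N ℓ r, |X N ℓ r| ≤ B)
    (hXrank : ∀ N, d ≤ N → (X N).rank = d)
    (hΞpd : Ξ.PosDef)
    (hΞ : ∀ r s, Tendsto (fun N : ℕ => (N : ℝ)⁻¹ * ((X N)ᵀ * X N) r s) atTop (𝓝 (Ξ r s))) :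
    ∀ (r s : Fin d) (k l : Fin p) (δ : ℝ), 0 < δ →
      Tendsto (fun N => P {ω |
          δ ≤ |sigmaFullHat X eps βv N ω r s k l - sigmaFull X Sig N r s k l|})
        atTop (𝓝 0) := by
  intro r s k l δ hδ
  obtain ⟨K, hK0, hKev⟩ := bmat_facts X B Ξ hXbound hΞpd hΞ
  set B' : ℝ := max B 0 with hB'
  have hB'0 : 0 ≤ B' := le_max_right _ _
  have hXB' : ∀ N ℓ t, |X N ℓ t| ≤ B' := fun N ℓ t => (hXbound N ℓ t).trans (le_max_left _ _)
  -- common moment facts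
  have hL2eps : ∀ N ℓ (m : Fin p), MemLp (fun ω => eps N ℓ ω m) 2 P :=
    fun N ℓ m => (hL4 N ℓ m).mono_exponent (by norm_num)
  have hvar_eps : ∀ N ℓ (m : Fin p), variance (fun ω => eps N ℓ ω m) P ≤ (1 + C₁)/2 :=
    fun N ℓ m => (variance_le_integral_sq (hL2eps N ℓ m)).trans
      (integral_sq_le (hL4 N ℓ m) (hmom4 N ℓ m))
  have hindep_eps : ∀ N (m : Fin p), ∀ ℓ ℓ' : Fin N, ℓ ≠ ℓ' →
      IndepFun (fun ω => eps N ℓ ω m) (fun ω => eps N ℓ' ω m) P := by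
    intro N m ℓ ℓ' hne
    exact ((hindep N).indepFun hne).comp (measurable_pi_apply m) (measurable_pi_apply m)
  -- (1) the pair term
  have hA : TendP P (fun N ω => (N : ℝ)⁻¹ * ∑ ℓ, (Bmat X N r ℓ * Bmat X N s ℓ) *
      (eps N ℓ ω k * eps N ℓ ω l - Sig N ℓ k l)) := by
    refine master P (fun N ℓ ω => eps N ℓ ω k * eps N ℓ ω l - Sig N ℓ k l)
      (fun N ℓ => Bmat X N r ℓ * Bmat X N s ℓ) (K * K) C₁
      (fun N ℓ => ((memℒp_mul_of_four (hL4 N ℓ k) (hL4 N ℓ l)).sub (memLp_const _)))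
      (fun N ℓ => ?_) (fun N ℓ => ?_) (fun N ℓ m hne => ?_) ?_
    · rw [integral_sub ((memℒp_mul_of_four (hL4 N ℓ k) (hL4 N ℓ l)).integrable one_le_two)
        (integrable_const _), hcov, integral_const]
      simp
    · exact variance_prod_sub_const_le (hL4 N ℓ k) (hL4 N ℓ l)
        (hmom4 N ℓ k) (hmom4 N ℓ l) (hcov N ℓ k l)
    · exact ((hindep N).indepFun hne).comp
        (((measurable_pi_apply k).mul (measurable_pi_apply l)).sub measurable_const)
        (((measurable_pi_apply k).mul (measurable_pi_apply l)).sub measurable_const)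
    · filter_upwards [hKev] with N hN
      intro ℓ
      exact abs_mul_le (hN.2 r ℓ) (hN.2 s ℓ)
  -- (2) the T terms
  have hT : ∀ (t : Fin d) (m : Fin p), TendP P (fun N ω =>
      (N : ℝ)⁻¹ * ∑ ℓ, (Bmat X N r ℓ * Bmat X N s ℓ * X N ℓ t) * eps N ℓ ω m) := by
    intro t m
    refine master P (fun N ℓ ω => eps N ℓ ω m)
      (fun N ℓ => Bmat X N r ℓ * Bmat X N s ℓ * X N ℓ t) (K * K * B') ((1 + C₁)/2)
      (fun N ℓ => hL2eps N ℓ m) (fun N ℓ => hmean N ℓ m) (fun N ℓ => hvar_eps N ℓ m)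
      (fun N => hindep_eps N m) ?_
    filter_upwards [hKev] with N hN
    intro ℓ
    exact abs_mul_le (abs_mul_le (hN.2 r ℓ) (hN.2 s ℓ)) (hXB' N ℓ t)
  -- (3) the estimation error terms
  have hG : ∀ (t : Fin d) (m : Fin p), TendP P (fun N ω =>
      betaHat X eps βv N ω t m - βv t m) := by
    intro t m
    have hraw : TendP P (fun N ω => (N : ℝ)⁻¹ * ∑ ℓ, Bmat X N t ℓ * eps N ℓ ω m) := by
      refine master P (fun N ℓ ω => eps N ℓ ω m) (fun N ℓ => Bmat X N t ℓ) K ((1 + C₁)/2)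
        (fun N ℓ => hL2eps N ℓ m) (fun N ℓ => hmean N ℓ m) (fun N ℓ => hvar_eps N ℓ m)
        (fun N => hindep_eps N m) ?_
      filter_upwards [hKev] with N hN
      exact fun ℓ => hN.2 t ℓ
    refine TendP.congr ?_ hraw
    filter_upwards [hKev, eventually_ge_atTop 1] with N hN hN1
    intro ω
    exact (betaHat_eq X eps βv N hN1 hN.1 ω t m).symm
  -- (4) the deterministic U coefficients are eventually bounded
  have hU : ∀ q : Fin d × Fin d, ∀ᶠ N : ℕ in atTop,
      |(N : ℝ)⁻¹ * ∑ ℓ, Bmat X N r ℓ * Bmat X N s ℓ * X N ℓ q.1 * X N ℓ q.2| ≤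
        K * K * B' * B' := by
    intro q
    filter_upwards [hKev] with N hN
    have hterm : ∀ ℓ : Fin N, |Bmat X N r ℓ * Bmat X N s ℓ * X N ℓ q.1 * X N ℓ q.2| ≤
        K * K * B' * B' := fun ℓ =>
      abs_mul_le (abs_mul_le (abs_mul_le (hN.2 r ℓ) (hN.2 s ℓ)) (hXB' N ℓ q.1)) (hXB' N ℓ q.2)
    have hM0 : 0 ≤ K * K * B' * B' := by positivity
    calc |(N : ℝ)⁻¹ * ∑ ℓ, Bmat X N r ℓ * Bmat X N s ℓ * X N ℓ q.1 * X N ℓ q.2|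
        ≤ (N : ℝ)⁻¹ * ∑ ℓ : Fin N, (K * K * B' * B') := by
          rw [abs_mul, abs_of_nonneg (by positivity : (0:ℝ) ≤ (N : ℝ)⁻¹)]
          exact mul_le_mul_of_nonneg_left
            ((Finset.abs_sum_le_sum_abs _ _).trans (Finset.sum_le_sum fun ℓ _ => hterm ℓ))
            (by positivity)
      _ = ((N : ℝ)⁻¹ * N) * (K * K * B' * B') := by
          rw [Finset.sum_const]
          simp [nsmul_eq_mul]
          ring
      _ ≤ 1 * (K * K * B' * B') := by
          refine mul_le_mul_of_nonneg_right ?_ hM0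
          rcases Nat.eq_zero_or_pos N with h | h
          · simp [h]
          · rw [inv_mul_cancel₀ (Nat.cast_ne_zero.2 h.ne' : (N:ℝ) ≠ 0)]
      _ = K * K * B' * B' := one_mul _
  -- assemble
  have htotal : TendP P (fun N ω =>
      sigmaFullHat X eps βv N ω r s k l - sigmaFull X Sig N r s k l) := by
    have hterm2 : TendP P (fun N ω => ∑ t, (betaHat X eps βv N ω t l - βv t l) *
        ((N : ℝ)⁻¹ * ∑ ℓ, (Bmat X N r ℓ * Bmat X N s ℓ * X N ℓ t) * eps N ℓ ω k)) :=
      TendP.sum Finset.univ fun t _ => (hG t l).mul (hT t k)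
    have hterm3 : TendP P (fun N ω => ∑ t, (betaHat X eps βv N ω t k - βv t k) *
        ((N : ℝ)⁻¹ * ∑ ℓ, (Bmat X N r ℓ * Bmat X N s ℓ * X N ℓ t) * eps N ℓ ω l)) :=
      TendP.sum Finset.univ fun t _ => (hG t k).mul (hT t l)
    have hterm4 : TendP P (fun N ω => ∑ q : Fin d × Fin d,
        ((betaHat X eps βv N ω q.1 k - βv q.1 k) * (betaHat X eps βv N ω q.2 l - βv q.2 l)) *
        ((N : ℝ)⁻¹ * ∑ ℓ, Bmat X N r ℓ * Bmat X N s ℓ * X N ℓ q.1 * X N ℓ q.2)) := by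
      refine TendP.sum Finset.univ fun q _ => ?_
      have h1 : TendP P (fun N ω =>
          ((N : ℝ)⁻¹ * ∑ ℓ, Bmat X N r ℓ * Bmat X N s ℓ * X N ℓ q.1 * X N ℓ q.2) *
          ((betaHat X eps βv N ω q.1 k - βv q.1 k) *
            (betaHat X eps βv N ω q.2 l - βv q.2 l))) :=
        TendP.bdd_mul (hU q) ((hG q.1 k).mul (hG q.2 l))
      refine TendP.congr ?_ h1
      exact Eventually.of_forall fun N => fun ω => mul_comm _ _
    have hfinal := ((hA.sub hterm2).sub hterm3).add hterm4
    refine TendP.congr ?_ hfinal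
    exact Eventually.of_forall fun N => fun ω => (decomp X eps βv Sig N ω r s k l).symm
  exact htotal δ hδ
end
end

section
/- Let ε_1,…,ε_N be independent p-dimensional random vectors with E[ε_ℓ] = 0 and Cov[ε_ℓ] = Σ_ℓ with entries σ_{ℓ(jk)} = Cov(ε_{ℓj}, ε_{ℓk}) uniformly bounded, let (p_{ℓm}) be a symmetric idempotent matrix with |p_{ℓm}| ≤ C/N uniformly, and let u_ℓ = ε_ℓ − Σ_m p_{ℓm} ε_m. Then for every pair of components j ≠ k, the off-diagonal bias satisfies (E[u_ℓ u_ℓ'] − Σ_ℓ)_{jk} = −p_{ℓℓ}σ_{ℓ(jk)} + Σ_{m=1}^N p_{ℓm}²(σ_{m(jk)} − σ_{ℓ(jk)}) = O(N⁻¹), uniformly in ℓ, j, k. -/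
open MeasureTheory ProbabilityTheory Matrix Filter Topology
open scoped ENNReal NNReal

noncomputable section

private lemma expand_aux {ι : Type*} [Fintype ι] (a b : ℝ) (c d q : ι → ℝ) :
    (a - ∑ m, q m * c m) * (b - ∑ n, q n * d n) =
      a * b - ∑ n, q n * (a * d n) - ∑ m, q m * (c m * b)
        + ∑ m, ∑ n, q m * q n * (c m * d n) := by
  have h1 : ∑ n, q n * (a * d n) = a * ∑ n, q n * d n := by
    rw [Finset.mul_sum]; exact Finset.sum_congr rfl fun n _ => by ring
  have h2 : ∑ m, q m * (c m * b) = (∑ m, q m * c m) * b := by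
    rw [Finset.sum_mul]; exact Finset.sum_congr rfl fun m _ => by ring
  have h3 : ∑ m, ∑ n, q m * q n * (c m * d n) = (∑ m, q m * c m) * (∑ n, q n * d n) := by
    rw [Finset.sum_mul_sum]
    exact Finset.sum_congr rfl fun m _ => Finset.sum_congr rfl fun n _ => by ring
  rw [h1, h2, h3]; ring


/-- **Off-diagonal bias of the residual outer products (proof of Theorem 1).** For
independent centered errors with uniformly bounded covariances and a symmetric idempotent
matrix with entries uniformly `≤ C/N`, the off-diagonal entries of the bias of the
residual outer product satisfy, for every pair of components `j ≠ k`,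
`(E[u_ℓu_ℓ'] − Σ_ℓ)_{jk} = −p_{ℓℓ}σ_{ℓ(jk)} + ∑_m p_{ℓm}²(σ_{m(jk)} − σ_{ℓ(jk)}) = O(N⁻¹)`
uniformly in `ℓ, j, k`. -/
theorem offdiagonal_residual_bias
    {p : ℕ} {Ω : Type*} [MeasurableSpace Ω] (P : Measure Ω) [IsProbabilityMeasure P]
    (eps : (N : ℕ) → Fin N → Ω → Fin p → ℝ)
    (Sig : (N : ℕ) → Fin N → Matrix (Fin p) (Fin p) ℝ)
    (Pm : (N : ℕ) → Matrix (Fin N) (Fin N) ℝ)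
    (S C : ℝ)
    -- measurability and square-integrability of the errors
    (hmeas : ∀ N ℓ k, Measurable (fun ω => eps N ℓ ω k))
    (hL2 : ∀ N ℓ k, MemLp (fun ω => eps N ℓ ω k) 2 P)
    -- independent, centered errors with covariance matrices Σ_ℓ and variances uniformly
    -- bounded by S
    (hindep : ∀ N, iIndepFun
      (fun ℓ => eps N ℓ) P)
    (hmean : ∀ N ℓ k, ∫ ω, eps N ℓ ω k ∂P = 0)
    (hcov : ∀ N ℓ j k, ∫ ω, eps N ℓ ω j * eps N ℓ ω k ∂P = Sig N ℓ j k)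
    (hcovbound : ∀ N ℓ j k, |Sig N ℓ j k| ≤ S)
    -- (p_{ℓm}) symmetric, idempotent, with entries uniformly O(N⁻¹)
    (hPsymm : ∀ N, (Pm N)ᵀ = Pm N) (hPidem : ∀ N, Pm N * Pm N = Pm N)
    (hPbound : ∀ N ℓ m, |Pm N ℓ m| ≤ C / N)
    -- the residuals u_ℓ = ε_ℓ − ∑_m p_{ℓm} ε_m
    (u : (N : ℕ) → Ω → Fin N → Fin p → ℝ)
    (hu : ∀ N ω ℓ k, u N ω ℓ k = eps N ℓ ω k - ∑ m, Pm N ℓ m * eps N m ω k) :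
    (∀ (N : ℕ) (ℓ : Fin N) (j k : Fin p), j ≠ k →
      (∫ ω, u N ω ℓ j * u N ω ℓ k ∂P) - Sig N ℓ j k =
        -(Pm N ℓ ℓ * Sig N ℓ j k) +
          ∑ m, (Pm N ℓ m) ^ 2 * (Sig N m j k - Sig N ℓ j k)) ∧
    ∃ K : ℝ, ∀ (N : ℕ) (ℓ : Fin N) (j k : Fin p), j ≠ k →
      |(∫ ω, u N ω ℓ j * u N ω ℓ k ∂P) - Sig N ℓ j k| ≤ K / N := by
  have key : ∀ (N : ℕ) (ℓ : Fin N) (j k : Fin p), j ≠ k →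
      (∫ ω, u N ω ℓ j * u N ω ℓ k ∂P) - Sig N ℓ j k =
        -(Pm N ℓ ℓ * Sig N ℓ j k) +
          ∑ m, (Pm N ℓ m) ^ 2 * (Sig N m j k - Sig N ℓ j k) := by
    intro N ℓ j k hjk
    -- components
    set f : Fin N → Ω → ℝ := fun m ω => eps N m ω j with hf
    set g : Fin N → Ω → ℝ := fun m ω => eps N m ω k with hg
    have hfL2 : ∀ m, MemLp (f m) 2 P := fun m => hL2 N m j
    have hgL2 : ∀ m, MemLp (g m) 2 P := fun m => hL2 N m k
    have hint : ∀ m n, Integrable (fun ω => f m ω * g n ω) P := by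
      intro m n
      have := ((hgL2 n).smul (hfL2 m) (r := 1))
      rw [memLp_one_iff_integrable] at this
      exact this
    -- cross expectations vanish
    have hcross : ∀ m n, m ≠ n → ∫ ω, f m ω * g n ω ∂P = 0 := by
      intro m n hmn
      have hind : IndepFun (f m) (g n) P :=
        ((hindep N).indepFun hmn).comp (measurable_pi_apply j) (measurable_pi_apply k)
      rw [hind.integral_fun_mul_eq_mul_integral (hfL2 m).aestronglyMeasurable (hgL2 n).aestronglyMeasurable,
        hf, hg]
      simp only [hmean]
      ring
    -- pointwise expansion
    have hpt : ∀ ω, u N ω ℓ j * u N ω ℓ k =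
        f ℓ ω * g ℓ ω - ∑ n, Pm N ℓ n * (f ℓ ω * g n ω)
          - ∑ m, Pm N ℓ m * (f m ω * g ℓ ω)
          + ∑ m, ∑ n, Pm N ℓ m * Pm N ℓ n * (f m ω * g n ω) := by
      intro ω
      rw [hu, hu]
      exact expand_aux (f ℓ ω) (g ℓ ω) (fun m => f m ω) (fun n => g n ω) (fun m => Pm N ℓ m)
    have hint2 : ∀ n : Fin N, Integrable (fun ω => Pm N ℓ n * (f ℓ ω * g n ω)) P :=
      fun n => (hint ℓ n).const_mul _
    have hint3 : ∀ m : Fin N, Integrable (fun ω => Pm N ℓ m * (f m ω * g ℓ ω)) P :=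
      fun m => (hint m ℓ).const_mul _
    have hint4 : ∀ m n : Fin N,
        Integrable (fun ω => Pm N ℓ m * Pm N ℓ n * (f m ω * g n ω)) P :=
      fun m n => (hint m n).const_mul _
    have hI1 : Integrable (fun ω => f ℓ ω * g ℓ ω) P := hint ℓ ℓ
    have hI2 : Integrable (fun ω => ∑ n, Pm N ℓ n * (f ℓ ω * g n ω)) P :=
      integrable_finset_sum _ fun n _ => hint2 n
    have hI3 : Integrable (fun ω => ∑ m, Pm N ℓ m * (f m ω * g ℓ ω)) P :=
      integrable_finset_sum _ fun m _ => hint3 m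
    have hI4 : Integrable (fun ω => ∑ m, ∑ n, Pm N ℓ m * Pm N ℓ n * (f m ω * g n ω)) P :=
      integrable_finset_sum _ fun m _ => integrable_finset_sum _ fun n _ => hint4 m n
    have hval : ∫ ω, u N ω ℓ j * u N ω ℓ k ∂P =
        Sig N ℓ j k - Pm N ℓ ℓ * Sig N ℓ j k - Pm N ℓ ℓ * Sig N ℓ j k
          + ∑ m, Pm N ℓ m ^ 2 * Sig N m j k := by
      have hI12 : Integrable (fun ω => f ℓ ω * g ℓ ω
          - ∑ n, Pm N ℓ n * (f ℓ ω * g n ω)) P := hI1.sub hI2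
      have hI123 : Integrable (fun ω => f ℓ ω * g ℓ ω
          - ∑ n, Pm N ℓ n * (f ℓ ω * g n ω)
          - ∑ m, Pm N ℓ m * (f m ω * g ℓ ω)) P := hI12.sub hI3
      rw [integral_congr_ae (Filter.Eventually.of_forall hpt)]
      rw [integral_add hI123 hI4,
        integral_sub hI12 hI3, integral_sub hI1 hI2,
        integral_finset_sum _ (fun n _ => hint2 n),
        integral_finset_sum _ (fun m _ => hint3 m),
        integral_finset_sum _ (fun m _ => integrable_finset_sum _ fun n _ => hint4 m n)]
      have einner : ∀ m : Fin N, ∫ ω, ∑ n, Pm N ℓ m * Pm N ℓ n * (f m ω * g n ω) ∂P =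
          ∑ n, ∫ ω, Pm N ℓ m * Pm N ℓ n * (f m ω * g n ω) ∂P :=
        fun m => integral_finset_sum _ (fun n _ => hint4 m n)
      simp only [einner]
      have e1 : ∫ ω, f ℓ ω * g ℓ ω ∂P = Sig N ℓ j k := hcov N ℓ j k
      have e2 : ∑ n, ∫ ω, Pm N ℓ n * (f ℓ ω * g n ω) ∂P = Pm N ℓ ℓ * Sig N ℓ j k := by
        rw [Finset.sum_eq_single ℓ]
        · rw [integral_const_mul _ _, hcov]
        · intro n _ hn
          rw [integral_const_mul _ _, hcross ℓ n (Ne.symm hn), mul_zero]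
        · simp
      have e3 : ∑ m, ∫ ω, Pm N ℓ m * (f m ω * g ℓ ω) ∂P = Pm N ℓ ℓ * Sig N ℓ j k := by
        rw [Finset.sum_eq_single ℓ]
        · rw [integral_const_mul _ _, hcov]
        · intro m _ hm
          rw [integral_const_mul _ _, hcross m ℓ hm, mul_zero]
        · simp
      have e4 : ∑ m, ∑ n, ∫ ω, Pm N ℓ m * Pm N ℓ n * (f m ω * g n ω) ∂P =
          ∑ m, Pm N ℓ m ^ 2 * Sig N m j k := by
        refine Finset.sum_congr rfl fun m _ => ?_
        rw [Finset.sum_eq_single m]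
        · rw [integral_const_mul _ _, hcov]; ring
        · intro n _ hn
          rw [integral_const_mul _ _, hcross m n (Ne.symm hn), mul_zero]
        · simp
      rw [e1, e2, e3, e4]
    -- diagonal identity from idempotence and symmetry
    have hdiag : Pm N ℓ ℓ = ∑ m, Pm N ℓ m ^ 2 := by
      have h := congrFun (congrFun (hPidem N) ℓ) ℓ
      rw [Matrix.mul_apply] at h
      rw [← h]
      refine Finset.sum_congr rfl fun m _ => ?_
      have hs : Pm N m ℓ = Pm N ℓ m := by
        have := congrFun (congrFun (hPsymm N) m) ℓ
        simpa [Matrix.transpose_apply] using this.symm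
      rw [hs]; ring
    have hsplit : ∑ m, Pm N ℓ m ^ 2 * (Sig N m j k - Sig N ℓ j k) =
        (∑ m, Pm N ℓ m ^ 2 * Sig N m j k) - (∑ m, Pm N ℓ m ^ 2) * Sig N ℓ j k := by
      simp only [mul_sub]
      rw [Finset.sum_sub_distrib, Finset.sum_mul]
    rw [hval, hsplit, ← hdiag]
    ring
  refine ⟨key, ⟨C * S + 2 * C ^ 2 * S, ?_⟩⟩
  intro N ℓ j k hjk
  rw [key N ℓ j k hjk]
  have hN : 0 < N := ℓ.pos
  have hNR : (0 : ℝ) < N := by exact_mod_cast hN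
  have hCN : (0 : ℝ) ≤ C / N := le_trans (abs_nonneg _) (hPbound N ℓ ℓ)
  have hS : 0 ≤ S := le_trans (abs_nonneg _) (hcovbound N ℓ j k)
  have habs : ∀ m, |Pm N ℓ m| ≤ C / N := hPbound N ℓ
  have hterm : ∀ m : Fin N, |Pm N ℓ m ^ 2 * (Sig N m j k - Sig N ℓ j k)| ≤
      (C / N) ^ 2 * (2 * S) := by
    intro m
    rw [abs_mul, abs_pow]
    have h1 : |Pm N ℓ m| ^ 2 ≤ (C / N) ^ 2 := by
      exact pow_le_pow_left₀ (abs_nonneg _) (habs m) 2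
    have h2 : |Sig N m j k - Sig N ℓ j k| ≤ 2 * S := by
      calc |Sig N m j k - Sig N ℓ j k| ≤ |Sig N m j k| + |Sig N ℓ j k| := abs_sub _ _
        _ ≤ S + S := add_le_add (hcovbound N m j k) (hcovbound N ℓ j k)
        _ = 2 * S := by ring
    exact mul_le_mul h1 h2 (abs_nonneg _) (by positivity)
  calc |-(Pm N ℓ ℓ * Sig N ℓ j k) + ∑ m, Pm N ℓ m ^ 2 * (Sig N m j k - Sig N ℓ j k)|
      ≤ |Pm N ℓ ℓ * Sig N ℓ j k| + |∑ m, Pm N ℓ m ^ 2 * (Sig N m j k - Sig N ℓ j k)| := by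
        have h := abs_add_le (-(Pm N ℓ ℓ * Sig N ℓ j k))
          (∑ m, Pm N ℓ m ^ 2 * (Sig N m j k - Sig N ℓ j k))
        rwa [abs_neg] at h
    _ ≤ (C / N) * S + ∑ m : Fin N, (C / N) ^ 2 * (2 * S) := by
        refine add_le_add ?_ ((Finset.abs_sum_le_sum_abs _ _).trans
          (Finset.sum_le_sum fun m _ => hterm m))
        rw [abs_mul]
        exact mul_le_mul (habs ℓ) (hcovbound N ℓ j k) (abs_nonneg _) hCN
    _ = (C / N) * S + N * ((C / N) ^ 2 * (2 * S)) := by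
        rw [Finset.sum_const, Finset.card_univ, Fintype.card_fin, nsmul_eq_mul]
    _ = (C * S + 2 * C ^ 2 * S) / N := by field_simp
end
end

section
/- Let ε_1,…,ε_N be independent p-dimensional random vectors with E[ε_ℓ] = 0, Cov[ε_ℓ] = Σ_ℓ with diagonal entries σ_{ℓk}², and uniformly bounded fourth moments, let (p_{ℓm}) be a symmetric idempotent matrix with |p_{ℓm}| ≤ C/N uniformly, and let u_ℓ = ε_ℓ − Σ_m p_{ℓm} ε_m. Then for each component k ∈ {1,…,p}, the averaged squared residuals are consistent: N⁻¹ Σ_{ℓ=1}^N (u_{ℓk}² − σ_{ℓk}²) → 0 in probability as N → ∞. -/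
open MeasureTheory ProbabilityTheory Matrix Filter Topology

noncomputable section

section Aux

variable {Ω : Type*} [MeasurableSpace Ω] (P : Measure Ω) [IsProbabilityMeasure P]

private lemma memLp_mul2 {f g : Ω → ℝ} (hf : MemLp f 4 P) (hg : MemLp g 4 P) :
    MemLp (fun ω => f ω * g ω) 2 P := by
  haveI : ENNReal.HolderTriple 4 4 2 := ⟨by
    simp only [← one_div]; rw [ENNReal.div_add_div_same, ENNReal.div_eq_div_iff] <;> norm_num⟩
  have h := MemLp.smul (p := 4) (q := 4) (r := 2) hg hf
  exact h

private lemma integrable_mul2 {f g : Ω → ℝ} (hf : MemLp f 2 P) (hg : MemLp g 2 P) :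
    Integrable (fun ω => f ω * g ω) P := by
  haveI : ENNReal.HolderTriple 2 2 1 := ⟨by
    simp only [← one_div]; rw [ENNReal.div_add_div_same, ENNReal.div_eq_div_iff] <;> norm_num⟩
  have h := MemLp.smul (p := 2) (q := 2) (r := 1) hg hf
  rw [← memLp_one_iff_integrable]
  exact h

private lemma cs_int {f g : Ω → ℝ} (hf : MemLp f 2 P) (hg : MemLp g 2 P) :
    ∫ ω, |f ω * g ω| ∂P ≤ Real.sqrt (∫ ω, f ω ^ 2 ∂P) * Real.sqrt (∫ ω, g ω ^ 2 ∂P) := by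
  have hpq : Real.HolderConjugate 2 2 := Real.HolderConjugate.two_two
  have hf2 : MemLp f (ENNReal.ofReal 2) P := by simpa [ENNReal.ofReal_ofNat] using hf
  have hg2 : MemLp g (ENNReal.ofReal 2) P := by simpa [ENNReal.ofReal_ofNat] using hg
  have h := integral_mul_norm_le_Lp_mul_Lq (μ := P) hpq hf2 hg2
  calc ∫ ω, |f ω * g ω| ∂P = ∫ ω, ‖f ω‖ * ‖g ω‖ ∂P := by
        simp [abs_mul, Real.norm_eq_abs]
    _ ≤ (∫ ω, ‖f ω‖ ^ (2:ℝ) ∂P) ^ ((1:ℝ)/2) * (∫ ω, ‖g ω‖ ^ (2:ℝ) ∂P) ^ ((1:ℝ)/2) := h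
    _ = Real.sqrt (∫ ω, f ω ^ 2 ∂P) * Real.sqrt (∫ ω, g ω ^ 2 ∂P) := by
        rw [Real.sqrt_eq_rpow, Real.sqrt_eq_rpow]
        congr 2
        all_goals
          refine integral_congr_ae (ae_of_all _ fun ω => ?_)
          show ‖_‖ ^ (2:ℝ) = _ ^ (2:ℕ)
          rw [show ((2:ℝ)) = ((2:ℕ):ℝ) by norm_num, Real.rpow_natCast, Real.norm_eq_abs, sq_abs]

private lemma integral_sq_sum_eq {N : ℕ} (Z : Fin N → Ω → ℝ)
    (hZ2 : ∀ ℓ, MemLp (Z ℓ) 2 P)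
    (h0 : ∀ ℓ m, ℓ ≠ m → ∫ ω, Z ℓ ω * Z m ω ∂P = 0) :
    ∫ ω, (∑ ℓ, Z ℓ ω) ^ 2 ∂P = ∑ ℓ, ∫ ω, (Z ℓ ω) ^ 2 ∂P := by
  have hint : ∀ ℓ m : Fin N, Integrable (fun ω => Z ℓ ω * Z m ω) P :=
    fun ℓ m => integrable_mul2 P (hZ2 ℓ) (hZ2 m)
  calc ∫ ω, (∑ ℓ, Z ℓ ω) ^ 2 ∂P
      = ∫ ω, ∑ ℓ, ∑ m, Z ℓ ω * Z m ω ∂P := by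
        refine integral_congr_ae (ae_of_all _ fun ω => ?_)
        show (∑ ℓ, Z ℓ ω) ^ 2 = ∑ ℓ, ∑ m, Z ℓ ω * Z m ω
        rw [pow_two, Finset.sum_mul_sum]
    _ = ∑ ℓ, ∑ m, ∫ ω, Z ℓ ω * Z m ω ∂P := by
        rw [integral_finset_sum _ fun ℓ _ => integrable_finset_sum _ fun m _ => hint ℓ m]
        exact Finset.sum_congr rfl fun ℓ _ => integral_finset_sum _ fun m _ => hint ℓ m
    _ = ∑ ℓ, ∫ ω, (Z ℓ ω) ^ 2 ∂P := by
        refine Finset.sum_congr rfl fun ℓ _ => ?_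
        rw [Finset.sum_eq_single ℓ (fun m _ hm => h0 ℓ m (Ne.symm hm)) (by simp)]
        exact integral_congr_ae (ae_of_all _ fun ω => (pow_two _).symm)

private lemma key_bound {N : ℕ} (hN : 1 ≤ N)
    (e : Fin N → Ω → ℝ) (σ : Fin N → ℝ) (Q : Matrix (Fin N) (Fin N) ℝ)
    (C' C₁ : ℝ) (hC' : 1 ≤ C')
    (he4 : ∀ ℓ, MemLp (e ℓ) 4 P)
    (hind : ∀ ℓ m, ℓ ≠ m → IndepFun (e ℓ) (e m) P)
    (hmean : ∀ ℓ, ∫ ω, e ℓ ω ∂P = 0)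
    (hcov : ∀ ℓ, ∫ ω, (e ℓ ω) ^ 2 ∂P = σ ℓ)
    (hmom : ∀ ℓ, ∫ ω, (e ℓ ω) ^ 4 ∂P ≤ C₁)
    (hQ : ∀ ℓ, ∑ m, (Q ℓ m) ^ 2 ≤ C' / N) :
    Integrable (fun ω => |(N:ℝ)⁻¹ * ∑ ℓ, ((e ℓ ω - ∑ m, Q ℓ m * e m ω) ^ 2 - σ ℓ)|) P ∧
    ∫ ω, |(N:ℝ)⁻¹ * ∑ ℓ, ((e ℓ ω - ∑ m, Q ℓ m * e m ω) ^ 2 - σ ℓ)| ∂P ≤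
      (Real.sqrt (max C₁ 1) + 2 * (Real.sqrt (max C₁ 1) * Real.sqrt (C' * max C₁ 1))
        + C' * max C₁ 1) / Real.sqrt N := by
  classical
  set D : ℝ := max C₁ 1 with hDdef
  have hD1 : (1:ℝ) ≤ D := le_max_right _ _
  have hD0 : (0:ℝ) ≤ D := by linarith
  have hC0 : (0:ℝ) ≤ C' := by linarith
  have hC₁D : C₁ ≤ D := le_max_left _ _
  have hNpos : (0:ℝ) < N := by exact_mod_cast hN
  have hN0 : ((N:ℝ)) ≠ 0 := ne_of_gt hNpos
  have h1N : (1:ℝ) ≤ N := by exact_mod_cast hN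
  have hsN : (0:ℝ) < Real.sqrt N := Real.sqrt_pos.mpr hNpos
  have hs0 : Real.sqrt (N:ℝ) ≠ 0 := ne_of_gt hsN
  have hNsq : Real.sqrt (N:ℝ) * Real.sqrt (N:ℝ) = (N:ℝ) := Real.mul_self_sqrt hNpos.le
  have hsNleN : Real.sqrt (N:ℝ) ≤ (N:ℝ) := by
    nlinarith [sq_nonneg (Real.sqrt (N:ℝ) - 1), hNsq, Real.sqrt_nonneg (N:ℝ)]
  -- basic integrability facts
  have he2 : ∀ ℓ, MemLp (e ℓ) 2 P := fun ℓ => (he4 ℓ).mono_exponent (by norm_num)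
  have he1 : ∀ ℓ, Integrable (e ℓ) P := fun ℓ =>
    memLp_one_iff_integrable.mp ((he4 ℓ).mono_exponent (by norm_num))
  have hesq2 : ∀ ℓ, MemLp (fun ω => e ℓ ω ^ 2) 2 P := fun ℓ => by
    rw [show (fun ω => e ℓ ω ^ 2) = fun ω => e ℓ ω * e ℓ ω from funext fun ω => pow_two _]
    exact memLp_mul2 P (he4 ℓ) (he4 ℓ)
  have heint2 : ∀ ℓ, Integrable (fun ω => e ℓ ω ^ 2) P := fun ℓ => by
    rw [show (fun ω => e ℓ ω ^ 2) = fun ω => e ℓ ω * e ℓ ω from funext fun ω => pow_two _]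
    exact integrable_mul2 P (he2 ℓ) (he2 ℓ)
  have heint4 : ∀ ℓ, Integrable (fun ω => e ℓ ω ^ 4) P := fun ℓ => by
    rw [show (fun ω => e ℓ ω ^ 4) = fun ω => (e ℓ ω ^ 2) * (e ℓ ω ^ 2) from
      funext fun ω => by ring]
    exact integrable_mul2 P (hesq2 ℓ) (hesq2 ℓ)
  have hσ0 : ∀ ℓ, 0 ≤ σ ℓ := fun ℓ => (hcov ℓ) ▸ integral_nonneg fun ω => sq_nonneg _
  have hsqrtD_le : Real.sqrt D ≤ D := by
    nlinarith [Real.sq_sqrt hD0, Real.sqrt_nonneg D]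
  -- the variances are uniformly bounded by D
  have hσle : ∀ ℓ, σ ℓ ≤ D := by
    intro ℓ
    have h2 := cs_int P (hesq2 ℓ) (memLp_const (1:ℝ))
    have h3 : ∫ ω, (e ℓ ω ^ 2) ^ 2 ∂P = ∫ ω, e ℓ ω ^ 4 ∂P :=
      integral_congr_ae (ae_of_all _ fun ω => by ring)
    have h4 : ∫ ω, ((1:ℝ)) ^ 2 ∂P = 1 := by simp
    have h5 : ∫ ω, |e ℓ ω ^ 2 * 1| ∂P = σ ℓ := by
      rw [← hcov ℓ]
      refine integral_congr_ae (ae_of_all _ fun ω => ?_)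
      show |e ℓ ω ^ 2 * 1| = e ℓ ω ^ 2
      rw [mul_one, abs_of_nonneg (sq_nonneg _)]
    calc σ ℓ = ∫ ω, |e ℓ ω ^ 2 * 1| ∂P := h5.symm
      _ ≤ Real.sqrt (∫ ω, (e ℓ ω ^ 2) ^ 2 ∂P) * Real.sqrt (∫ ω, ((1:ℝ)) ^ 2 ∂P) := h2
      _ = Real.sqrt (∫ ω, e ℓ ω ^ 4 ∂P) := by rw [h3, h4, Real.sqrt_one, mul_one]
      _ ≤ Real.sqrt D := Real.sqrt_le_sqrt ((hmom ℓ).trans hC₁D)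
      _ ≤ D := hsqrtD_le
  -- orthogonality of distinct errors
  have hee0 : ∀ ℓ m, ℓ ≠ m → ∫ ω, e ℓ ω * e m ω ∂P = 0 := by
    intro ℓ m h
    have h' : ∫ ω, e ℓ ω * e m ω ∂P = (∫ ω, e ℓ ω ∂P) * ∫ ω, e m ω ∂P :=
      (hind ℓ m h).integral_mul_eq_mul_integral (he1 ℓ).aestronglyMeasurable
          (he1 m).aestronglyMeasurable
    rw [h', hmean, zero_mul]
  -- the smoothed terms v ℓ = ∑ m Q ℓ m e m
  have hv2 : ∀ ℓ, MemLp (fun ω => ∑ m, Q ℓ m * e m ω) 2 P := fun ℓ =>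
    memLp_finset_sum _ fun m _ => (he2 m).const_mul (Q ℓ m)
  have hEv2 : ∀ ℓ, ∫ ω, (∑ m, Q ℓ m * e m ω) ^ 2 ∂P = ∑ m, (Q ℓ m) ^ 2 * σ m := by
    intro ℓ
    rw [integral_sq_sum_eq P _ (fun m => (he2 m).const_mul (Q ℓ m)) ?_]
    · refine Finset.sum_congr rfl fun m _ => ?_
      have h7 : ∫ ω, (Q ℓ m * e m ω) ^ 2 ∂P = (Q ℓ m) ^ 2 * ∫ ω, e m ω ^ 2 ∂P := by
        rw [← integral_const_mul]
        refine integral_congr_ae (ae_of_all _ fun ω => ?_)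
        show (Q ℓ m * e m ω) ^ 2 = Q ℓ m ^ 2 * e m ω ^ 2
        ring
      rw [h7, hcov]
    · intro m m' hmm'
      have h8 : ∫ ω, (Q ℓ m * e m ω) * (Q ℓ m' * e m' ω) ∂P
          = (Q ℓ m * Q ℓ m') * ∫ ω, e m ω * e m' ω ∂P := by
        rw [← integral_const_mul]
        refine integral_congr_ae (ae_of_all _ fun ω => ?_)
        show (Q ℓ m * e m ω) * (Q ℓ m' * e m' ω) = Q ℓ m * Q ℓ m' * (e m ω * e m' ω)
        ring
      rw [h8, hee0 m m' hmm', mul_zero]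
  have hEv2le : ∀ ℓ, ∫ ω, (∑ m, Q ℓ m * e m ω) ^ 2 ∂P ≤ C' * D / N := by
    intro ℓ
    rw [hEv2 ℓ]
    calc ∑ m, (Q ℓ m) ^ 2 * σ m ≤ ∑ m, (Q ℓ m) ^ 2 * D :=
          Finset.sum_le_sum fun m _ => mul_le_mul_of_nonneg_left (hσle m) (sq_nonneg _)
      _ = (∑ m, (Q ℓ m) ^ 2) * D := by rw [Finset.sum_mul]
      _ ≤ (C' / N) * D := mul_le_mul_of_nonneg_right (hQ ℓ) hD0
      _ = C' * D / N := by ring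
  -- the centered squares Z ℓ = e ℓ ^ 2 - σ ℓ
  have hZ2 : ∀ ℓ, MemLp (fun ω => e ℓ ω ^ 2 - σ ℓ) 2 P := fun ℓ =>
    (hesq2 ℓ).sub (memLp_const _)
  have hZint : ∀ ℓ, Integrable (fun ω => e ℓ ω ^ 2 - σ ℓ) P := fun ℓ =>
    (heint2 ℓ).sub (integrable_const _)
  have hZmean : ∀ ℓ, ∫ ω, (e ℓ ω ^ 2 - σ ℓ) ∂P = 0 := fun ℓ => by
    rw [integral_sub (heint2 ℓ) (integrable_const _), hcov ℓ, integral_const, probReal_univ,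
      one_smul, sub_self]
  have hZZ0 : ∀ ℓ m, ℓ ≠ m →
      ∫ ω, (e ℓ ω ^ 2 - σ ℓ) * (e m ω ^ 2 - σ m) ∂P = 0 := by
    intro ℓ m h
    have hmf : Measurable fun x : ℝ => x ^ 2 - σ ℓ := by fun_prop
    have hmg : Measurable fun x : ℝ => x ^ 2 - σ m := by fun_prop
    have hiZ : IndepFun (fun ω => e ℓ ω ^ 2 - σ ℓ) (fun ω => e m ω ^ 2 - σ m) P :=
      (hind ℓ m h).comp hmf hmg
    have h' : ∫ ω, (e ℓ ω ^ 2 - σ ℓ) * (e m ω ^ 2 - σ m) ∂P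
        = (∫ ω, (e ℓ ω ^ 2 - σ ℓ) ∂P) * ∫ ω, (e m ω ^ 2 - σ m) ∂P :=
      hiZ.integral_mul_eq_mul_integral (hZint ℓ).aestronglyMeasurable
          (hZint m).aestronglyMeasurable
    rw [h', hZmean, hZmean, mul_zero]
  have hZsq : ∀ ℓ, ∫ ω, (e ℓ ω ^ 2 - σ ℓ) ^ 2 ∂P ≤ D := by
    intro ℓ
    have h9 : ∫ ω, (e ℓ ω ^ 2 - σ ℓ) ^ 2 ∂P
        = ∫ ω, (e ℓ ω ^ 4 - (2 * σ ℓ) * (e ℓ ω ^ 2) + (σ ℓ) ^ 2) ∂P :=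
      integral_congr_ae (ae_of_all _ fun ω => by ring)
    have hb : Integrable (fun ω => (2 * σ ℓ) * (e ℓ ω ^ 2)) P := (heint2 ℓ).const_mul _
    have ha : Integrable (fun ω => e ℓ ω ^ 4 - (2 * σ ℓ) * (e ℓ ω ^ 2)) P :=
      (heint4 ℓ).sub hb
    rw [h9, integral_add ha (integrable_const _), integral_sub (heint4 ℓ) hb,
      integral_const_mul, hcov ℓ, integral_const, probReal_univ, one_smul]
    nlinarith [sq_nonneg (σ ℓ), hmom ℓ]
  -- the fluctuation term W = ∑ Z ℓ
  have hW2 : MemLp (fun ω => ∑ ℓ, (e ℓ ω ^ 2 - σ ℓ)) 2 P :=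
    memLp_finset_sum _ fun ℓ _ => hZ2 ℓ
  have hWint : Integrable (fun ω => ∑ ℓ, (e ℓ ω ^ 2 - σ ℓ)) P :=
    integrable_finset_sum _ fun ℓ _ => hZint ℓ
  have hEW2 : ∫ ω, (∑ ℓ, (e ℓ ω ^ 2 - σ ℓ)) ^ 2 ∂P ≤ N * D := by
    rw [integral_sq_sum_eq P _ hZ2 hZZ0]
    calc ∑ ℓ, ∫ ω, (e ℓ ω ^ 2 - σ ℓ) ^ 2 ∂P ≤ ∑ _ℓ : Fin N, D :=
          Finset.sum_le_sum fun ℓ _ => hZsq ℓ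
      _ = N * D := by simp [Finset.sum_const, Finset.card_univ, nsmul_eq_mul]
  have hEabsW : ∫ ω, |∑ ℓ, (e ℓ ω ^ 2 - σ ℓ)| ∂P ≤ Real.sqrt N * Real.sqrt D := by
    have h2 := cs_int P hW2 (memLp_const (1:ℝ))
    have h4 : ∫ ω, ((1:ℝ)) ^ 2 ∂P = 1 := by simp
    calc ∫ ω, |∑ ℓ, (e ℓ ω ^ 2 - σ ℓ)| ∂P
        = ∫ ω, |(∑ ℓ, (e ℓ ω ^ 2 - σ ℓ)) * 1| ∂P := by simp
      _ ≤ Real.sqrt (∫ ω, (∑ ℓ, (e ℓ ω ^ 2 - σ ℓ)) ^ 2 ∂P) *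
            Real.sqrt (∫ ω, ((1:ℝ)) ^ 2 ∂P) := h2
      _ ≤ Real.sqrt (N * D) * 1 := by
          rw [h4, Real.sqrt_one]
          exact mul_le_mul_of_nonneg_right (Real.sqrt_le_sqrt hEW2) zero_le_one
      _ = Real.sqrt N * Real.sqrt D := by rw [mul_one, Real.sqrt_mul hNpos.le]
  -- the cross term X = ∑ e ℓ * v ℓ
  have hev_int : ∀ ℓ, Integrable (fun ω => e ℓ ω * ∑ m, Q ℓ m * e m ω) P := fun ℓ =>
    integrable_mul2 P (he2 ℓ) (hv2 ℓ)
  have hXint : Integrable (fun ω => ∑ ℓ, e ℓ ω * ∑ m, Q ℓ m * e m ω) P :=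
    integrable_finset_sum _ fun ℓ _ => hev_int ℓ
  have hEabsev : ∀ ℓ, ∫ ω, |e ℓ ω * ∑ m, Q ℓ m * e m ω| ∂P
      ≤ Real.sqrt D * (Real.sqrt (C' * D) / Real.sqrt N) := by
    intro ℓ
    have h2 := cs_int P (he2 ℓ) (hv2 ℓ)
    have h6 : ∫ ω, e ℓ ω ^ 2 ∂P ≤ D := (hcov ℓ).le.trans (hσle ℓ)
    calc ∫ ω, |e ℓ ω * ∑ m, Q ℓ m * e m ω| ∂P
        ≤ Real.sqrt (∫ ω, e ℓ ω ^ 2 ∂P) *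
            Real.sqrt (∫ ω, (∑ m, Q ℓ m * e m ω) ^ 2 ∂P) := h2
      _ ≤ Real.sqrt D * Real.sqrt (C' * D / N) :=
          mul_le_mul (Real.sqrt_le_sqrt h6) (Real.sqrt_le_sqrt (hEv2le ℓ))
            (Real.sqrt_nonneg _) (Real.sqrt_nonneg _)
      _ = Real.sqrt D * (Real.sqrt (C' * D) / Real.sqrt N) := by
          rw [Real.sqrt_div (mul_nonneg hC0 hD0)]
  have hEabsX : ∫ ω, |∑ ℓ, e ℓ ω * ∑ m, Q ℓ m * e m ω| ∂P
      ≤ N * (Real.sqrt D * (Real.sqrt (C' * D) / Real.sqrt N)) := by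
    have hstep : ∫ ω, |∑ ℓ, e ℓ ω * ∑ m, Q ℓ m * e m ω| ∂P
        ≤ ∫ ω, ∑ ℓ, |e ℓ ω * ∑ m, Q ℓ m * e m ω| ∂P :=
      integral_mono hXint.abs (integrable_finset_sum _ fun ℓ _ => (hev_int ℓ).abs)
        fun ω => Finset.abs_sum_le_sum_abs _ _
    rw [integral_finset_sum _ fun ℓ _ => (hev_int ℓ).abs] at hstep
    refine hstep.trans ?_
    calc ∑ ℓ, ∫ ω, |e ℓ ω * ∑ m, Q ℓ m * e m ω| ∂P
        ≤ ∑ _ℓ : Fin N, Real.sqrt D * (Real.sqrt (C' * D) / Real.sqrt N) :=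
          Finset.sum_le_sum fun ℓ _ => hEabsev ℓ
      _ = N * (Real.sqrt D * (Real.sqrt (C' * D) / Real.sqrt N)) := by
          simp [Finset.sum_const, Finset.card_univ, nsmul_eq_mul]
  -- the squared smoothing term
  have hvsq_int : ∀ ℓ, Integrable (fun ω => (∑ m, Q ℓ m * e m ω) ^ 2) P := fun ℓ => by
    rw [show (fun ω => (∑ m, Q ℓ m * e m ω) ^ 2)
      = fun ω => (∑ m, Q ℓ m * e m ω) * (∑ m, Q ℓ m * e m ω) from funext fun ω => pow_two _]
    exact integrable_mul2 P (hv2 ℓ) (hv2 ℓ)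
  have hVqint : Integrable (fun ω => ∑ ℓ, (∑ m, Q ℓ m * e m ω) ^ 2) P :=
    integrable_finset_sum _ fun ℓ _ => hvsq_int ℓ
  have hEVq : ∫ ω, ∑ ℓ, (∑ m, Q ℓ m * e m ω) ^ 2 ∂P ≤ C' * D := by
    rw [integral_finset_sum _ fun ℓ _ => hvsq_int ℓ]
    calc ∑ ℓ, ∫ ω, (∑ m, Q ℓ m * e m ω) ^ 2 ∂P ≤ ∑ _ℓ : Fin N, C' * D / N :=
          Finset.sum_le_sum fun ℓ _ => hEv2le ℓ
      _ = N * (C' * D / N) := by simp [Finset.sum_const, Finset.card_univ, nsmul_eq_mul]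
      _ = C' * D := by field_simp
  -- integrability of the main quantity
  have hu2int : ∀ ℓ, Integrable (fun ω => (e ℓ ω - ∑ m, Q ℓ m * e m ω) ^ 2 - σ ℓ) P := by
    intro ℓ
    have h1 : MemLp (fun ω => e ℓ ω - ∑ m, Q ℓ m * e m ω) 2 P := (he2 ℓ).sub (hv2 ℓ)
    have h2 : Integrable (fun ω => (e ℓ ω - ∑ m, Q ℓ m * e m ω) ^ 2) P := by
      rw [show (fun ω => (e ℓ ω - ∑ m, Q ℓ m * e m ω) ^ 2)
        = fun ω => (e ℓ ω - ∑ m, Q ℓ m * e m ω) * (e ℓ ω - ∑ m, Q ℓ m * e m ω) from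
        funext fun ω => pow_two _]
      exact integrable_mul2 P h1 h1
    exact h2.sub (integrable_const _)
  have hFint : Integrable
      (fun ω => (N:ℝ)⁻¹ * ∑ ℓ, ((e ℓ ω - ∑ m, Q ℓ m * e m ω) ^ 2 - σ ℓ)) P :=
    (integrable_finset_sum _ fun ℓ _ => hu2int ℓ).const_mul _
  refine ⟨hFint.abs, ?_⟩
  -- pointwise decomposition and triangle inequality
  have hpt : ∀ ω, ∑ ℓ, ((e ℓ ω - ∑ m, Q ℓ m * e m ω) ^ 2 - σ ℓ)
      = (∑ ℓ, (e ℓ ω ^ 2 - σ ℓ)) - 2 * (∑ ℓ, e ℓ ω * ∑ m, Q ℓ m * e m ω)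
        + ∑ ℓ, (∑ m, Q ℓ m * e m ω) ^ 2 := by
    intro ω
    rw [Finset.mul_sum, ← Finset.sum_sub_distrib, ← Finset.sum_add_distrib]
    exact Finset.sum_congr rfl fun ℓ _ => by ring
  have tri : ∀ a b c : ℝ, 0 ≤ c → |a - 2 * b + c| ≤ |a| + 2 * |b| + c := by
    intro a b c hc
    calc |a - 2 * b + c| ≤ |a - 2 * b| + |c| := abs_add_le _ _
      _ ≤ (|a| + |2 * b|) + |c| := by
          refine add_le_add ?_ le_rfl
          calc |a - 2 * b| = |a + -(2 * b)| := by rw [sub_eq_add_neg]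
            _ ≤ |a| + |(-(2 * b))| := abs_add_le _ _
            _ = |a| + |2 * b| := by rw [abs_neg]
      _ = |a| + 2 * |b| + c := by rw [abs_mul, abs_two, abs_of_nonneg hc]
  have habs : ∀ ω, |(N:ℝ)⁻¹ * ∑ ℓ, ((e ℓ ω - ∑ m, Q ℓ m * e m ω) ^ 2 - σ ℓ)|
      ≤ (N:ℝ)⁻¹ * (|∑ ℓ, (e ℓ ω ^ 2 - σ ℓ)| + 2 * |∑ ℓ, e ℓ ω * ∑ m, Q ℓ m * e m ω|
        + ∑ ℓ, (∑ m, Q ℓ m * e m ω) ^ 2) := by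
    intro ω
    rw [abs_mul, abs_of_nonneg (inv_nonneg.mpr hNpos.le), hpt ω]
    exact mul_le_mul_of_nonneg_left
      (tri _ _ _ (Finset.sum_nonneg fun ℓ _ => sq_nonneg _)) (inv_nonneg.mpr hNpos.le)
  -- put everything together
  have hrhs_int : Integrable (fun ω => (N:ℝ)⁻¹ *
      (|∑ ℓ, (e ℓ ω ^ 2 - σ ℓ)| + 2 * |∑ ℓ, e ℓ ω * ∑ m, Q ℓ m * e m ω|
        + ∑ ℓ, (∑ m, Q ℓ m * e m ω) ^ 2)) P :=
    ((hWint.abs.add (hXint.abs.const_mul 2)).add hVqint).const_mul _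
  have hmono2 : ∫ ω, |(N:ℝ)⁻¹ * ∑ ℓ, ((e ℓ ω - ∑ m, Q ℓ m * e m ω) ^ 2 - σ ℓ)| ∂P
      ≤ (N:ℝ)⁻¹ * ((∫ ω, |∑ ℓ, (e ℓ ω ^ 2 - σ ℓ)| ∂P)
        + 2 * (∫ ω, |∑ ℓ, e ℓ ω * ∑ m, Q ℓ m * e m ω| ∂P)
        + ∫ ω, ∑ ℓ, (∑ m, Q ℓ m * e m ω) ^ 2 ∂P) := by
    have hWabs : Integrable (fun ω => |∑ ℓ, (e ℓ ω ^ 2 - σ ℓ)|) P := hWint.abs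
    have hXabs2 : Integrable (fun ω => 2 * |∑ ℓ, e ℓ ω * ∑ m, Q ℓ m * e m ω|) P :=
      hXint.abs.const_mul 2
    have hWX : Integrable (fun ω => |∑ ℓ, (e ℓ ω ^ 2 - σ ℓ)|
        + 2 * |∑ ℓ, e ℓ ω * ∑ m, Q ℓ m * e m ω|) P := hWabs.add hXabs2
    refine (integral_mono hFint.abs hrhs_int habs).trans_eq ?_
    rw [integral_const_mul, integral_add hWX hVqint, integral_add hWabs hXabs2,
      integral_const_mul]
  refine hmono2.trans ?_
  -- the three numeric bounds
  have f1 : (N:ℝ)⁻¹ * (∫ ω, |∑ ℓ, (e ℓ ω ^ 2 - σ ℓ)| ∂P) ≤ Real.sqrt D / Real.sqrt N := by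
    have heq : (N:ℝ)⁻¹ * (Real.sqrt N * Real.sqrt D) = Real.sqrt D / Real.sqrt N := by
      rw [eq_div_iff hs0]
      calc (N:ℝ)⁻¹ * (Real.sqrt N * Real.sqrt D) * Real.sqrt N
          = (Real.sqrt N * Real.sqrt N) * (N:ℝ)⁻¹ * Real.sqrt D := by ring
        _ = Real.sqrt D := by rw [hNsq, mul_inv_cancel₀ hN0, one_mul]
    exact (mul_le_mul_of_nonneg_left hEabsW (inv_nonneg.mpr hNpos.le)).trans heq.le
  have f2 : (N:ℝ)⁻¹ * (2 * ∫ ω, |∑ ℓ, e ℓ ω * ∑ m, Q ℓ m * e m ω| ∂P)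
      ≤ 2 * (Real.sqrt D * Real.sqrt (C' * D)) / Real.sqrt N := by
    have heq : (N:ℝ)⁻¹ * (2 * (N * (Real.sqrt D * (Real.sqrt (C' * D) / Real.sqrt N))))
        = 2 * (Real.sqrt D * Real.sqrt (C' * D)) / Real.sqrt N := by
      field_simp
    refine le_trans ?_ heq.le
    exact mul_le_mul_of_nonneg_left
      (mul_le_mul_of_nonneg_left hEabsX zero_le_two) (inv_nonneg.mpr hNpos.le)
  have f3 : (N:ℝ)⁻¹ * (∫ ω, ∑ ℓ, (∑ m, Q ℓ m * e m ω) ^ 2 ∂P) ≤ C' * D / Real.sqrt N := by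
    have h1 : (N:ℝ)⁻¹ * (∫ ω, ∑ ℓ, (∑ m, Q ℓ m * e m ω) ^ 2 ∂P) ≤ (N:ℝ)⁻¹ * (C' * D) :=
      mul_le_mul_of_nonneg_left hEVq (inv_nonneg.mpr hNpos.le)
    refine h1.trans ?_
    rw [div_eq_mul_inv, mul_comm ((N:ℝ))⁻¹ (C' * D)]
    exact mul_le_mul_of_nonneg_left (inv_anti₀ hsN hsNleN) (mul_nonneg hC0 hD0)
  calc (N:ℝ)⁻¹ * ((∫ ω, |∑ ℓ, (e ℓ ω ^ 2 - σ ℓ)| ∂P)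
        + 2 * (∫ ω, |∑ ℓ, e ℓ ω * ∑ m, Q ℓ m * e m ω| ∂P)
        + ∫ ω, ∑ ℓ, (∑ m, Q ℓ m * e m ω) ^ 2 ∂P)
      = (N:ℝ)⁻¹ * (∫ ω, |∑ ℓ, (e ℓ ω ^ 2 - σ ℓ)| ∂P)
        + (N:ℝ)⁻¹ * (2 * ∫ ω, |∑ ℓ, e ℓ ω * ∑ m, Q ℓ m * e m ω| ∂P)
        + (N:ℝ)⁻¹ * (∫ ω, ∑ ℓ, (∑ m, Q ℓ m * e m ω) ^ 2 ∂P) := by ring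
    _ ≤ Real.sqrt D / Real.sqrt N + 2 * (Real.sqrt D * Real.sqrt (C' * D)) / Real.sqrt N
        + C' * D / Real.sqrt N := add_le_add (add_le_add f1 f2) f3
    _ = (Real.sqrt D + 2 * (Real.sqrt D * Real.sqrt (C' * D)) + C' * D) / Real.sqrt N := by
        rw [add_div, add_div]

end Aux

/-- **Claim (12) in the proof of Theorem 1.** For independent centered errors with
uniformly bounded fourth moments and a symmetric idempotent matrix with entries uniformly
`≤ C/N`, the averaged squared residuals are consistent: for each component `k`,
`N⁻¹∑_ℓ (u_{ℓk}² − σ_{ℓk}²) → 0` in probability as `N → ∞`. -/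
theorem averaged_squared_residuals_consistent
    {p : ℕ} {Ω : Type*} [MeasurableSpace Ω] (P : Measure Ω) [IsProbabilityMeasure P]
    (eps : (N : ℕ) → Fin N → Ω → Fin p → ℝ)
    (Sig : (N : ℕ) → Fin N → Matrix (Fin p) (Fin p) ℝ)
    (Pm : (N : ℕ) → Matrix (Fin N) (Fin N) ℝ)
    (C C₁ : ℝ)
    -- measurability and integrability of the errors
    (hmeas : ∀ N ℓ k, Measurable (fun ω => eps N ℓ ω k))
    (hL4 : ∀ N ℓ k, MemLp (fun ω => eps N ℓ ω k) 4 P)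
    -- independent, centered errors with covariance matrices Σ_ℓ and uniformly bounded
    -- fourth moments
    (hindep : ∀ N, iIndepFun
      (fun ℓ => eps N ℓ) P)
    (hmean : ∀ N ℓ k, ∫ ω, eps N ℓ ω k ∂P = 0)
    (hcov : ∀ N ℓ j k, ∫ ω, eps N ℓ ω j * eps N ℓ ω k ∂P = Sig N ℓ j k)
    (hmom4 : ∀ N ℓ k, ∫ ω, (eps N ℓ ω k) ^ 4 ∂P ≤ C₁)
    -- (p_{ℓm}) symmetric, idempotent, with entries uniformly O(N⁻¹)
    (hPsymm : ∀ N, (Pm N)ᵀ = Pm N) (hPidem : ∀ N, Pm N * Pm N = Pm N)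
    (hPbound : ∀ N ℓ m, |Pm N ℓ m| ≤ C / N)
    -- the residuals u_ℓ = ε_ℓ − ∑_m p_{ℓm} ε_m
    (u : (N : ℕ) → Ω → Fin N → Fin p → ℝ)
    (hu : ∀ N ω ℓ k, u N ω ℓ k = eps N ℓ ω k - ∑ m, Pm N ℓ m * eps N m ω k) :
    ∀ (k : Fin p) (δ : ℝ), 0 < δ →
      Tendsto (fun N : ℕ => P {ω | δ ≤
          |(N : ℝ)⁻¹ * ∑ ℓ, ((u N ω ℓ k) ^ 2 - Sig N ℓ k k)|})
        atTop (𝓝 0) := by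
  intro k δ hδ
  set C' : ℝ := max C 1 with hC'def
  set D : ℝ := max C₁ 1 with hDdef
  have hC'1 : (1:ℝ) ≤ C' := le_max_right _ _
  have hD1 : (1:ℝ) ≤ D := le_max_right _ _
  set K : ℝ := Real.sqrt D + 2 * (Real.sqrt D * Real.sqrt (C' * D)) + C' * D with hKdef
  have hK0 : 0 ≤ K := by
    have h1 : (0:ℝ) ≤ C' * D := mul_nonneg (by linarith) (by linarith)
    have h2 := Real.sqrt_nonneg D
    have h3 := Real.sqrt_nonneg (C' * D)
    positivity
  -- the per-N bound
  have key : ∀ N : ℕ, 1 ≤ N →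
      Integrable (fun ω => |(N : ℝ)⁻¹ * ∑ ℓ, ((u N ω ℓ k) ^ 2 - Sig N ℓ k k)|) P ∧
      ∫ ω, |(N : ℝ)⁻¹ * ∑ ℓ, ((u N ω ℓ k) ^ 2 - Sig N ℓ k k)| ∂P ≤ K / Real.sqrt N := by
    intro N hN
    have hNpos : (0:ℝ) < N := by exact_mod_cast hN
    have hsym : ∀ a b, Pm N a b = Pm N b a := fun a b =>
      (congrFun (congrFun (hPsymm N) a) b).symm.trans (Matrix.transpose_apply _ a b)
    have hQ : ∀ ℓ, ∑ m, (Pm N ℓ m) ^ 2 ≤ C' / N := by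
      intro ℓ
      have h3 : (Pm N * Pm N) ℓ ℓ = Pm N ℓ ℓ := by rw [hPidem N]
      rw [Matrix.mul_apply] at h3
      have h4 : ∑ m, (Pm N ℓ m) ^ 2 = Pm N ℓ ℓ := by
        rw [← h3]
        exact Finset.sum_congr rfl fun m _ => by rw [pow_two, hsym m ℓ]
      rw [h4]
      calc Pm N ℓ ℓ ≤ |Pm N ℓ ℓ| := le_abs_self _
        _ ≤ C / N := hPbound N ℓ ℓ
        _ ≤ C' / N := div_le_div_of_nonneg_right (le_max_left C 1) hNpos.le
    have hind : ∀ ℓ m : Fin N, ℓ ≠ m →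
        IndepFun (fun ω => eps N ℓ ω k) (fun ω => eps N m ω k) P := by
      intro ℓ m h
      exact ((hindep N).indepFun h).comp (measurable_pi_apply k) (measurable_pi_apply k)
    have hkey := key_bound P hN (fun ℓ ω => eps N ℓ ω k) (fun ℓ => Sig N ℓ k k) (Pm N)
      C' C₁ hC'1 (fun ℓ => hL4 N ℓ k) hind (fun ℓ => hmean N ℓ k)
      (fun ℓ => by simpa [pow_two] using hcov N ℓ k k) (fun ℓ => hmom4 N ℓ k) hQ
    have hfeq : (fun ω => |(N : ℝ)⁻¹ * ∑ ℓ, ((u N ω ℓ k) ^ 2 - Sig N ℓ k k)|) =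
        (fun ω => |(N : ℝ)⁻¹ *
          ∑ ℓ, ((eps N ℓ ω k - ∑ m, Pm N ℓ m * eps N m ω k) ^ 2 - Sig N ℓ k k)|) := by
      funext ω
      congr 1
      congr 1
      exact Finset.sum_congr rfl fun ℓ _ => by rw [hu]
    constructor
    · rw [hfeq]; exact hkey.1
    · calc ∫ ω, |(N : ℝ)⁻¹ * ∑ ℓ, ((u N ω ℓ k) ^ 2 - Sig N ℓ k k)| ∂P
          = ∫ ω, |(N : ℝ)⁻¹ *
            ∑ ℓ, ((eps N ℓ ω k - ∑ m, Pm N ℓ m * eps N m ω k) ^ 2 - Sig N ℓ k k)| ∂P := by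
            rw [hfeq]
        _ ≤ K / Real.sqrt N := hkey.2
  -- conclude by Markov's inequality and a squeeze
  have hs : Tendsto (fun N : ℕ => Real.sqrt N) atTop atTop := by
    apply Filter.tendsto_atTop_atTop.mpr
    intro b
    refine ⟨⌈b ^ 2⌉₊, fun n hn => ?_⟩
    rcases le_or_gt b 0 with hb | hb
    · exact hb.trans (Real.sqrt_nonneg _)
    · have h1 : b ^ 2 ≤ (n : ℝ) := le_trans (Nat.le_ceil _) (by exact_mod_cast hn)
      calc b = Real.sqrt (b ^ 2) := (Real.sqrt_sq hb.le).symm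
        _ ≤ Real.sqrt n := Real.sqrt_le_sqrt h1
  have hr : Tendsto (fun N : ℕ => δ⁻¹ * (K / Real.sqrt N)) atTop (𝓝 0) := by
    have h2 := (hs.inv_tendsto_atTop).const_mul (δ⁻¹ * K)
    simp only [mul_zero] at h2
    refine h2.congr fun N => ?_
    simp [div_eq_mul_inv, mul_assoc, Pi.inv_apply]
  have hh : Tendsto (fun N : ℕ => ENNReal.ofReal (δ⁻¹ * (K / Real.sqrt N))) atTop (𝓝 0) := by
    have := ENNReal.tendsto_ofReal hr
    simpa using this
  refine tendsto_of_tendsto_of_tendsto_of_le_of_le' tendsto_const_nhds hh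
    (Eventually.of_forall fun N => zero_le) ?_
  filter_upwards [eventually_ge_atTop 1] with N hN
  obtain ⟨hint, hbound⟩ := key N hN
  have hM := mul_meas_ge_le_integral_of_nonneg (μ := P)
    (f := fun ω => |(N : ℝ)⁻¹ * ∑ ℓ, ((u N ω ℓ k) ^ 2 - Sig N ℓ k k)|)
    (ae_of_all _ fun ω => abs_nonneg _) hint δ
  have ht : (P {ω | δ ≤ |(N : ℝ)⁻¹ * ∑ ℓ, ((u N ω ℓ k) ^ 2 - Sig N ℓ k k)|}).toReal ≤
      δ⁻¹ * (K / Real.sqrt N) := by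
    have h5 := le_trans hM hbound
    have h6 : (P {ω | δ ≤ |(N : ℝ)⁻¹ * ∑ ℓ, ((u N ω ℓ k) ^ 2 - Sig N ℓ k k)|}).toReal =
        δ⁻¹ * (δ * (P {ω | δ ≤ |(N : ℝ)⁻¹ * ∑ ℓ, ((u N ω ℓ k) ^ 2 - Sig N ℓ k k)|}).toReal) := by
      rw [← mul_assoc, inv_mul_cancel₀ (ne_of_gt hδ), one_mul]
    rw [h6]
    exact mul_le_mul_of_nonneg_left h5 (inv_nonneg.mpr hδ.le)
  exact (ENNReal.le_ofReal_iff_toReal_le (measure_ne_top P _)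
    (mul_nonneg (inv_nonneg.mpr hδ.le) (div_nonneg hK0 (Real.sqrt_nonneg _)))).mpr ht
end
end
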